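/- arXiv:1203.4028 — 6 statements merged into one kernel-verified Lean document; each statement's English description precedes it below -/
import Mathlib

section
/- Let (X,d), (Y,ρ) be metric spaces and let 𝒞 be a family of uniform embeddings f : X → Y such that the family of inverses {f⁻¹ : f(X) → X | f ∈ 𝒞} is equi-continuous. Then any continuous map f : X → Y lying in the closure of 𝒞 with respect to the sup-metric is itself a uniform embedding. -/
/-- A sup-metric limit of a family of uniform embeddings with equi-continuous
inverses is itself a uniform embedding. -/
theorem stmt_2 {X Y : Type*} [MetricSpace X] [MetricSpace Y]
    (𝒞 : Set (X → Y)) (hC : ∀ g ∈ 𝒞, IsUniformEmbedding g)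
    (hequi : ∀ ε > (0:ℝ), ∃ δ > (0:ℝ), ∀ g ∈ 𝒞, ∀ x x' : X,
      dist (g x) (g x') < δ → dist x x' < ε)
    (f : X → Y) (hf : Continuous f)
    (hcl : ∀ ε > (0:ℝ), ∃ g ∈ 𝒞, ∀ x, dist (f x) (g x) < ε) :
    IsUniformEmbedding f := by
  rw [Metric.isUniformEmbedding_iff']
  constructor
  · intro ε hε
    obtain ⟨g, hg, hfg⟩ := hcl (ε/3) (by positivity)
    have hgu : UniformContinuous g := (hC g hg).uniformContinuous
    obtain ⟨δ, hδ, hδ'⟩ := Metric.uniformContinuous_iff.1 hgu (ε/3) (by positivity)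
    refine ⟨δ, hδ, fun {a b} hab => ?_⟩
    have h1 : dist (f a) (f b) ≤ dist (f a) (g a) + dist (g a) (g b) + dist (g b) (f b) :=
      dist_triangle4 _ _ _ _
    have h2 : dist (g b) (f b) < ε/3 := by rw [dist_comm]; exact hfg b
    have h3 : dist (g a) (g b) < ε/3 := hδ' hab
    linarith [hfg a]
  · intro δ hδ
    obtain ⟨δ', hδ', hδ''⟩ := hequi δ hδ
    refine ⟨δ'/3, by positivity, fun {a b} hab => ?_⟩
    obtain ⟨g, hg, hfg⟩ := hcl (δ'/3) (by positivity)
    have h1 : dist (g a) (g b) ≤ dist (g a) (f a) + dist (f a) (f b) + dist (f b) (g b) :=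
      dist_triangle4 _ _ _ _
    have h2 : dist (g a) (f a) < δ'/3 := by rw [dist_comm]; exact hfg a
    have h3 : dist (g a) (g b) < δ' := by linarith [hfg b]
    exact hδ'' g hg a b h3
end

section
/- Let P be a topological space, (X,d_X), (Y,d_Y), (Z,d_Z) metric spaces, and suppose f : P → C(X,Y) and g : P → C(X,Z) are continuous with respect to the sup-metric topologies, and h : P → C^u(Y,Z) is a function into the uniformly continuous maps such that for each p ∈ P, f_p is surjective and h_p ∘ f_p = g_p. Then h is continuous with respect to the sup-metric topology on C^u(Y,Z). -/
open scoped ENNReal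

/-- The extended sup-distance between two maps. -/
noncomputable def supEdist {A B : Type*} [PseudoEMetricSpace B] (f g : A → B) : ℝ≥0∞ :=
  ⨆ x, edist (f x) (g x)

/-- Continuity of a family of maps with respect to the sup-metric topology. -/
def SupCont {P A B : Type*} [TopologicalSpace P] [PseudoEMetricSpace B]
    (F : P → A → B) : Prop :=
  ∀ p : P, ∀ ε : ℝ≥0∞, 0 < ε → ∀ᶠ q in nhds p, supEdist (F q) (F p) < ε

/-- Lemma 2.7: if `f, g : P → C(X,·)` are continuous in the sup-metric, each `f_p`
is surjective, each `h_p` is uniformly continuous and `h_p ∘ f_p = g_p`, then `h`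
is continuous in the sup-metric. -/
theorem stmt_4 {P X Y Z : Type*} [TopologicalSpace P]
    [MetricSpace X] [MetricSpace Y] [MetricSpace Z]
    (f : P → X → Y) (g : P → X → Z) (h : P → Y → Z)
    (hfcont : ∀ p, Continuous (f p)) (hgcont : ∀ p, Continuous (g p))
    (hhuc : ∀ p, UniformContinuous (h p))
    (hf : SupCont f) (hg : SupCont g)
    (hsurj : ∀ p, Function.Surjective (f p))
    (hcomp : ∀ p, (h p) ∘ (f p) = g p) :
    SupCont h := by
  intro p ε hε
  set ε' : ℝ≥0∞ := min (ε / 3) 1 with hε'def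
  have hε'pos : 0 < ε' := by
    simp only [hε'def, lt_min_iff]
    exact ⟨ENNReal.div_pos hε.ne' (by norm_num), one_pos⟩
  have hsum : ε' + ε' < ε := by
    rcases le_total (ε / 3) 1 with hle | hle
    · have : ε' = ε / 3 := min_eq_left hle
      rw [this]
      have hεfin : ε ≠ ⊤ := by
        intro htop
        rw [htop] at hle
        simp [ENNReal.top_div] at hle
      calc ε / 3 + ε / 3 = 2 * (ε / 3) := by ring
        _ < ε := by
          rw [← mul_div_assoc]
          refine ENNReal.div_lt_of_lt_mul ?_
          calc 2 * ε < 3 * ε := by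
                rw [mul_comm 2 ε, mul_comm 3 ε]; exact ENNReal.mul_lt_mul_right hε.ne' hεfin (by norm_num)
            _ = ε * 3 := mul_comm _ _
    · have : ε' = 1 := min_eq_right hle
      rw [this]
      have h3 : (3 : ℝ≥0∞) ≤ ε := by
        by_contra hlt
        push_neg at hlt
        have : ε / 3 < 1 := ENNReal.div_lt_of_lt_mul (by simpa using hlt)
        exact absurd (lt_of_le_of_lt hle this) (lt_irrefl _)
      calc (1 : ℝ≥0∞) + 1 = 2 := by norm_num
        _ < 3 := by norm_num
        _ ≤ ε := h3
  -- uniform continuity of h p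
  obtain ⟨δ, hδpos, hδ⟩ := (EMetric.uniformContinuous_iff.mp (hhuc p)) ε' hε'pos
  filter_upwards [hf p δ hδpos, hg p ε' hε'pos] with q hfq hgq
  refine lt_of_le_of_lt ?_ hsum
  refine iSup_le fun y => ?_
  obtain ⟨x, rfl⟩ := hsurj q y
  have h1 : h q (f q x) = g q x := congrFun (hcomp q) x
  have h2 : h p (f p x) = g p x := congrFun (hcomp p) x
  calc edist (h q (f q x)) (h p (f q x))
      ≤ edist (h q (f q x)) (h p (f p x)) + edist (h p (f p x)) (h p (f q x)) :=
        edist_triangle _ _ _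
    _ ≤ ε' + ε' := by
        gcongr
        · rw [h1, h2]
          exact le_of_lt (lt_of_le_of_lt (le_iSup (fun x => edist (g q x) (g p x)) x) hgq)
        · refine le_of_lt (hδ ?_)
          rw [edist_comm]
          exact lt_of_le_of_lt (le_iSup (fun x => edist (f q x) (f p x)) x) hfq
end

section
/- Let π : (X,d) → (Y,ρ) be a metric covering projection with Y compact, and ε > 0 such that every fiber of π is ε-discrete. Suppose U ⊂ Y is open, V ⊂ π⁻¹(U) is open and mapped isometrically onto U by π, E ⊂ V, and F = π(E). Then d(X − V, E) ≥ min{ε/2, ρ(Y − U, F)}. -/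
/-- A metric covering projection: a covering projection between metric spaces
which is isometric on sheets over an open cover, has uniformly discrete fibers,
and is 1-Lipschitz. -/
structure IsMetricCoveringProj {X Y : Type*} [MetricSpace X] [MetricSpace Y]
    (π : X → Y) : Prop where
  covering : IsCoveringMap π
  evenly : ∀ y : Y, ∃ U : Set Y, IsOpen U ∧ y ∈ U ∧ ∃ 𝒱 : Set (Set X),
    (∀ V ∈ 𝒱, IsOpen V) ∧ π ⁻¹' U = ⋃₀ 𝒱 ∧ 𝒱.PairwiseDisjoint id ∧
    ∀ V ∈ 𝒱, Set.BijOn π V U ∧ ∀ x ∈ V, ∀ x' ∈ V, dist (π x) (π x') = dist x x'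
  discreteFibers : ∀ y : Y, ∃ ε > (0:ℝ), ∀ x ∈ π ⁻¹' {y}, ∀ x' ∈ π ⁻¹' {y},
    x ≠ x' → ε ≤ dist x x'
  short : ∀ x x' : X, dist (π x) (π x') ≤ dist x x'

/-- Lemma 2.2(2): if `V` is a sheet over `U` and `E ⊆ V` with `F = π(E)`, then
`d(X − V, E) ≥ min {ε/2, ρ(Y − U, F)}`, stated via lower bounds. -/
theorem stmt_8 {X Y : Type*} [MetricSpace X] [MetricSpace Y] [CompactSpace Y]
    (π : X → Y) (h : IsMetricCoveringProj π)
    (ε : ℝ) (hε : 0 < ε)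
    (hfib : ∀ y : Y, ∀ x ∈ π ⁻¹' {y}, ∀ x' ∈ π ⁻¹' {y}, x ≠ x' → ε ≤ dist x x')
    (U : Set Y) (hU : IsOpen U) (V : Set X) (hV : IsOpen V) (hVU : V ⊆ π ⁻¹' U)
    (hbij : Set.BijOn π V U)
    (hiso : ∀ x ∈ V, ∀ x' ∈ V, dist (π x) (π x') = dist x x')
    (E : Set X) (hE : E ⊆ V) (F : Set Y) (hF : F = π '' E) :
    ∀ x ∈ E, ∀ x' ∉ V, ∀ c : ℝ, c ≤ ε / 2 →
      (∀ y ∉ U, ∀ z ∈ F, c ≤ dist y z) → c ≤ dist x' x := by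
  intro x hx x' hx' c hc hcF
  by_cases hπ : π x' ∈ U
  · -- x' projects into U; pick the point in V over π x'
    obtain ⟨x'', hx''V, hx''⟩ := hbij.surjOn hπ
    have hne : x' ≠ x'' := fun e => hx' (e ▸ hx''V)
    have hεd : ε ≤ dist x' x'' :=
      hfib (π x') x' rfl x'' hx'' hne
    have hdd : dist x x'' ≤ dist x' x := by
      have := hiso x (hE hx) x'' hx''V
      calc dist x x'' = dist (π x) (π x'') := (this).symm
        _ = dist (π x') (π x) := by rw [hx'', dist_comm]
        _ ≤ dist x' x := h.short x' x
    have : ε ≤ 2 * dist x' x := by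
      calc ε ≤ dist x' x'' := hεd
        _ ≤ dist x' x + dist x x'' := dist_triangle _ _ _
        _ ≤ dist x' x + dist x' x := by linarith
        _ = 2 * dist x' x := by ring
    linarith
  · have hF' : π x ∈ F := hF ▸ ⟨x, hx, rfl⟩
    calc c ≤ dist (π x') (π x) := hcF _ hπ _ hF'
      _ ≤ dist x' x := h.short x' x
end

section
/- Let γ : [0,1] → C([0,4),[0,4)) be defined by γ(s)(u) = 2u for u ∈ [0,1], γ(s)(u) = (s/(1+s))(u−1) + 2 for u ∈ [1, 2+s], and γ(s)(u) = u for u ∈ [2+s, 4), and let λ_t(s)(u) = (1−t)u + t·γ(s)(u). Then for every (s,t) ∈ [0,1] × [0,1] with (s,t) ≠ (0,1), the map λ_t(s) : [0,4) → [0,4) is a homeomorphism of [0,4) onto itself, while λ_1(0) is not injective; moreover λ_t(s)(u) = u for u ∈ [2+s, 4) and λ_0(s) = id for all s. -/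
/-- The map `γ(s) : [0,4) → [0,4)` from Lemma 2.8. -/
noncomputable def gammaMap (s u : ℝ) : ℝ :=
  if u ≤ 1 then 2 * u
  else if u ≤ 2 + s then (s / (1 + s)) * (u - 1) + 2
  else u

/-- The homotopy `λ_t(s) = (1−t)·id + t·γ(s)`. -/
noncomputable def lamMap (t s u : ℝ) : ℝ := (1 - t) * u + t * gammaMap s u

lemma gamma_ge {s : ℝ} (hs : 0 ≤ s) {u : ℝ} (hu : 2 + s ≤ u) : gammaMap s u = u := by
  have h1s : (1 : ℝ) + s ≠ 0 := by positivity
  unfold gammaMap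
  rcases eq_or_lt_of_le hu with h | h
  · subst h
    rw [if_neg (by linarith), if_pos le_rfl]
    field_simp
    ring
  · rw [if_neg (by linarith), if_neg (by linarith)]

lemma lam_ge {t s : ℝ} (hs : 0 ≤ s) {u : ℝ} (hu : 2 + s ≤ u) : lamMap t s u = u := by
  rw [lamMap, gamma_ge hs hu]; ring

lemma lam_mono {s t : ℝ} (hs : 0 ≤ s) (ht0 : 0 ≤ t) (ht1 : t ≤ 1) (hts : t < 1 + s) :
    StrictMono (lamMap t s) := by
  have h1s : (0 : ℝ) < 1 + s := by linarith
  intro a b hab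
  simp only [lamMap, gammaMap]
  set m := s / (1 + s) with hm
  have hm0 : 0 ≤ m := div_nonneg hs h1s.le
  have hms : m * (1 + s) = s := div_mul_cancel₀ s h1s.ne'
  have hslope : 0 < 1 - t + t * m := by
    by_contra hc
    push_neg at hc
    nlinarith
  split_ifs with h1 h2 h3 h4 h5 h6 h7 <;>
    nlinarith [mul_pos hslope (by linarith : (0:ℝ) < b - a)]

lemma lam_cont (t s : ℝ) (hs : 0 ≤ s) : Continuous (lamMap t s) := by
  have h1s : (1 : ℝ) + s ≠ 0 := by positivity
  have hg : Continuous (gammaMap s) := by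
    unfold gammaMap
    apply Continuous.if_le
    · continuity
    · apply Continuous.if_le
      · continuity
      · continuity
      · continuity
      · continuity
      · intro x hx
        subst hx
        field_simp
        ring
    · continuity
    · continuity
    · intro x hx
      subst hx
      rw [if_pos (by linarith)]
      norm_num
  unfold lamMap
  fun_prop

/-- For `(s,t) ≠ (0,1)` the map `λ_t(s)` is a self-homeomorphism of `[0,4)`
equal to the identity on `[2+s,4)`, `λ_0(s) = id`, while `λ_1(0)` is not
injective on `[0,4)`. -/
theorem stmt_13 :
    (∀ s ∈ Set.Icc (0:ℝ) 1, ∀ t ∈ Set.Icc (0:ℝ) 1,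
      ((s, t) ≠ ((0:ℝ), (1:ℝ)) →
        ∃ e : ↥(Set.Ico (0:ℝ) 4) ≃ₜ ↥(Set.Ico (0:ℝ) 4),
          ∀ u : ↥(Set.Ico (0:ℝ) 4), (e u : ℝ) = lamMap t s u) ∧
      (∀ u ∈ Set.Ico (2 + s) (4:ℝ), lamMap t s u = u) ∧
      (∀ u : ℝ, lamMap 0 s u = u)) ∧
    ¬ Set.InjOn (lamMap 1 0) (Set.Ico (0:ℝ) 4) := by
  constructor
  · intro s hs t ht
    obtain ⟨hs0, hs1⟩ := hs
    obtain ⟨ht0, ht1⟩ := ht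
    refine ⟨?_, fun u hu => lam_ge hs0 hu.1, fun u => by simp [lamMap]⟩
    intro hne
    have hts : t < 1 + s := by
      rcases eq_or_lt_of_le ht1 with h | h
      · rcases eq_or_lt_of_le hs0 with h' | h'
        · exact absurd (by rw [← h', ← h]) hne
        · linarith
      · linarith
    have hmono := lam_mono hs0 ht0 ht1 hts
    have hcont := lam_cont t s hs0
    have hf0 : lamMap t s 0 = 0 := by simp [lamMap, gammaMap]
    have hf3 : lamMap t s 3 = 3 := lam_ge hs0 (by linarith)
    have hsurj : Function.Surjective (lamMap t s) := by
      intro y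
      have hmax : lamMap t s (max y 3) = max y 3 :=
        lam_ge hs0 (le_trans (by linarith) (le_max_right y 3))
      have hminle : min y 0 ≤ 1 := le_trans (min_le_right y 0) (by norm_num)
      have hmin : lamMap t s (min y 0) ≤ y := by
        have h0 : min y 0 ≤ 0 := min_le_right y 0
        rw [lamMap, gammaMap, if_pos hminle]
        nlinarith [min_le_left y 0]
      have hle : min y 0 ≤ max y 3 := le_trans (min_le_left y 0) (le_max_left y 3)
      obtain ⟨x, _, hx⟩ := intermediate_value_Icc hle hcont.continuousOn
        ⟨hmin, by rw [hmax]; exact le_max_left y 3⟩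
      exact ⟨x, hx⟩
    set e0 : ℝ ≃o ℝ := StrictMono.orderIsoOfSurjective _ hmono hsurj with he0
    have hcoe : ⇑(e0.toHomeomorph) = lamMap t s := by
      ext x
      exact congrFun (StrictMono.coe_orderIsoOfSurjective _ hmono hsurj) x
    have himg : e0.toHomeomorph '' Set.Ico 0 4 = Set.Ico 0 4 := by
      rw [hcoe]
      apply Set.Subset.antisymm
      · rintro y ⟨u, ⟨hu0, hu4⟩, rfl⟩
        constructor
        · calc (0:ℝ) = lamMap t s 0 := hf0.symm
            _ ≤ lamMap t s u := hmono.monotone hu0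
        · rcases le_or_gt u 3 with h | h
          · calc lamMap t s u ≤ lamMap t s 3 := hmono.monotone h
              _ = 3 := hf3
              _ < 4 := by norm_num
          · rw [lam_ge hs0 (by linarith)]; exact hu4
      · rintro y ⟨hy0, hy4⟩
        rcases le_or_gt 3 y with h | h
        · exact ⟨y, ⟨by linarith, hy4⟩, lam_ge hs0 (by linarith)⟩
        · have hy : y ∈ Set.Icc (lamMap t s 0) (lamMap t s 3) := by
            rw [hf0, hf3]; exact ⟨hy0, h.le⟩
          obtain ⟨x, hx, hxy⟩ := intermediate_value_Icc (by norm_num : (0:ℝ) ≤ 3)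
            hcont.continuousOn hy
          exact ⟨x, ⟨hx.1, by linarith [hx.2]⟩, hxy⟩
    refine ⟨(e0.toHomeomorph.image (Set.Ico 0 4)).trans (Homeomorph.setCongr himg), ?_⟩
    intro u
    show (e0.toHomeomorph u.1 : ℝ) = lamMap t s u
    rw [hcoe]
  · intro h
    have h1 : lamMap 1 0 1 = 2 := by norm_num [lamMap, gammaMap]
    have h2 : lamMap 1 0 2 = 2 := by norm_num [lamMap, gammaMap]
    have := h (show (1:ℝ) ∈ Set.Ico (0:ℝ) 4 by norm_num)
      (show (2:ℝ) ∈ Set.Ico (0:ℝ) 4 by norm_num) (h1.trans h2.symm)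
    norm_num at this
end

section
/- Let (X,d) be a metric space, S ⊂ X compact, with an open collar neighborhood θ : S × [0,4) ≅ N ⊂ X sending S × {0} onto S, and set N_a = θ(S × [0,a]) for a ∈ [0,4). Then there exists a strong deformation retraction φ_t (t ∈ [0,1]) of H^u_{N_1}(X)_b onto H^u_{N_2}(X)_b such that φ_t(h) = h on h⁻¹(X − N_3) − N_3 for all h and t. -/
open Set Function


open scoped unitInterval

/-- The uniform topology (induced by the sup-metric) on the group of uniform
homeomorphisms of a metric space. -/
noncomputable instance uniformEquivTop {X : Type*} [MetricSpace X] :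
    TopologicalSpace (X ≃ᵤ X) :=
  TopologicalSpace.induced (fun h => UniformFun.ofFun (⇑h : X → X)) inferInstance

namespace SDR14


noncomputable def bF (t δ u : ℝ) : ℝ :=
  min u (max ((1 - t / 2) * u) (u - t + t * (u - 2) / δ))

section bFlemmas

variable {t δ : ℝ} (ht0 : 0 ≤ t) (ht1 : t ≤ 1) (hδ0 : 0 < δ) (hδ1 : δ ≤ 1 / 2)

lemma bF_le (u : ℝ) : bF t δ u ≤ u := min_le_left _ _

include ht0 hδ0 in
lemma bF_zero : bF t δ 0 = 0 := by
  have h1 : (1 - t / 2) * 0 = 0 := by ring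
  have h2 : (0:ℝ) - t + t * (0 - 2) / δ ≤ 0 := by
    have : t * (0 - 2) / δ ≤ 0 := by
      apply div_nonpos_of_nonpos_of_nonneg
      · nlinarith
      · linarith
    linarith
  rw [bF, h1]
  rw [max_eq_left h2, min_self]

include ht0 ht1 hδ0 in
lemma bF_expand {u v : ℝ} (huv : u ≤ v) :
    (v - u) / 2 ≤ bF t δ v - bF t δ u := by
  have hA : (v - u) / 2 ≤ (1 - t / 2) * v - (1 - t / 2) * u := by nlinarith
  have hB : (v - u) / 2 ≤ (v - t + t * (v - 2) / δ) - (u - t + t * (u - 2) / δ) := by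
    have : 0 ≤ t * (v - 2) / δ - t * (u - 2) / δ := by
      rw [div_sub_div_same]
      apply div_nonneg _ hδ0.le
      nlinarith
    linarith
  set A1 := (1 - t / 2) * u with hA1
  set A2 := (1 - t / 2) * v with hA2
  set B1 := u - t + t * (u - 2) / δ with hB1
  set B2 := v - t + t * (v - 2) / δ with hB2
  have hmax : max A1 B1 + (v - u) / 2 ≤ max A2 B2 := by
    rcases le_total A1 B1 with h | h
    · rw [max_eq_right h]; exact le_trans (by linarith) (le_max_right _ _)
    · rw [max_eq_left h]; exact le_trans (by linarith) (le_max_left _ _)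
  have hmin : min u (max A1 B1) + (v - u) / 2 ≤ min v (max A2 B2) := by
    rcases le_total v (max A2 B2) with h | h
    · rw [min_eq_left h]
      have h3 := min_le_left u (max A1 B1)
      linarith
    · rw [min_eq_right h]
      have h3 := min_le_right u (max A1 B1)
      linarith
  have e1 : bF t δ u = min u (max A1 B1) := rfl
  have e2 : bF t δ v = min v (max A2 B2) := rfl
  linarith [hmin]

include ht0 ht1 hδ0 in
lemma bF_mono {u v : ℝ} (huv : u ≤ v) : bF t δ u ≤ bF t δ v := by
  have := bF_expand ht0 ht1 hδ0 huv
  linarith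

include ht0 ht1 hδ0 in
lemma bF_nonneg {u : ℝ} (hu : 0 ≤ u) : 0 ≤ bF t δ u := by
  have := bF_mono ht0 ht1 hδ0 hu
  rw [bF_zero ht0 hδ0] at this
  exact this

include ht0 hδ0 in
lemma bF_id_of_ge {u : ℝ} (hu : 2 + δ ≤ u) : bF t δ u = u := by
  have hB : u ≤ u - t + t * (u - 2) / δ := by
    have h2 : t ≤ t * (u - 2) / δ := by
      rw [le_div_iff₀ hδ0]; nlinarith
    linarith
  exact min_eq_left (le_trans hB (le_max_right _ _))

lemma bF_t_zero (u : ℝ) : bF 0 δ u = u := by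
  have : (1 - (0:ℝ) / 2) * u = u := by ring
  simp [bF, this]

include hδ0 in
lemma bF_le_one_of_t_one {u : ℝ} (hu : u ≤ 2) : bF 1 δ u ≤ 1 := by
  have h1 : (1 - (1:ℝ) / 2) * u ≤ 1 := by nlinarith
  have h2 : u - 1 + 1 * (u - 2) / δ ≤ 1 := by
    have : 1 * (u - 2) / δ ≤ 0 := by
      apply div_nonpos_of_nonpos_of_nonneg <;> linarith
    linarith
  calc bF 1 δ u ≤ max ((1 - 1 / 2) * u) (u - 1 + 1 * (u - 2) / δ) := min_le_right _ _
    _ ≤ 1 := max_le h1 h2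

include ht0 hδ0 in
lemma bF_gt_two {u : ℝ} (hu : 2 < bF t δ u) : u - bF t δ u ≤ δ := by
  rcases le_total (2 + δ) u with h | h
  · rw [bF_id_of_ge ht0 hδ0 h]; linarith
  · have := bF_le (t := t) (δ := δ) u; linarith

lemma bF_param (δm : ℝ) (hδm : 0 < δm) {t t' δ δ' u : ℝ}
    (hδ : δm ≤ δ) (hδ' : δm ≤ δ') (ht0 : 0 ≤ t) (ht0' : 0 ≤ t') (ht1' : t' ≤ 1)
    (hu0 : 0 ≤ u) (hu4 : u ≤ 4) :
    |bF t δ u - bF t' δ' u| ≤ (|t - t'| + |δ - δ'|) * (3 + 2 / δm + 2 / δm ^ 2) := by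
  have hδ0 : 0 < δ := lt_of_lt_of_le hδm hδ
  have hδ0' : 0 < δ' := lt_of_lt_of_le hδm hδ'
  have hA : |(1 - t / 2) * u - (1 - t' / 2) * u| ≤ |t - t'| * 2 := by
    have he : (1 - t / 2) * u - (1 - t' / 2) * u = (t' - t) * (u / 2) := by ring
    rw [he, abs_mul, abs_sub_comm]
    have h1 : |u / 2| ≤ 2 := by rw [abs_le]; constructor <;> linarith
    nlinarith [abs_nonneg (t - t')]
  have hB : |(u - t + t * (u - 2) / δ) - (u - t' + t' * (u - 2) / δ')| ≤
      |t - t'| * (1 + 2 / δm) + |δ - δ'| * (2 / δm ^ 2) := by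
    have he : (u - t + t * (u - 2) / δ) - (u - t' + t' * (u - 2) / δ') =
        (t' - t) + (u - 2) * (t * δ' - t' * δ) / (δ * δ') := by
      field_simp; ring
    rw [he]
    have hu2 : |u - 2| ≤ 2 := by rw [abs_le]; constructor <;> linarith
    have hnum : |t * δ' - t' * δ| ≤ |t - t'| * δ' + |δ - δ'| := by
      have he2 : t * δ' - t' * δ = (t - t') * δ' + t' * (δ' - δ) := by ring
      rw [he2]
      calc |(t - t') * δ' + t' * (δ' - δ)| ≤ |(t - t') * δ'| + |t' * (δ' - δ)| := abs_add_le _ _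
        _ ≤ |t - t'| * δ' + |δ - δ'| := by
            rw [abs_mul, abs_mul, abs_sub_comm δ' δ, abs_of_pos hδ0']
            have h1 : |t'| * |δ - δ'| ≤ 1 * |δ - δ'| := by
              apply mul_le_mul_of_nonneg_right _ (abs_nonneg _)
              rw [abs_le]; constructor <;> linarith
            linarith
    have habs : |(u - 2) * (t * δ' - t' * δ) / (δ * δ')| ≤
        |t - t'| * (2 / δm) + |δ - δ'| * (2 / δm ^ 2) := by
      rw [abs_div, abs_mul, abs_of_pos (mul_pos hδ0 hδ0')]
      have step1 : |u - 2| * |t * δ' - t' * δ| / (δ * δ') ≤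
          (2 * (|t - t'| * δ' + |δ - δ'|)) / (δ * δ') := by
        gcongr
      have step2 : (2 * (|t - t'| * δ' + |δ - δ'|)) / (δ * δ') =
          2 * |t - t'| / δ + 2 * |δ - δ'| / (δ * δ') := by
        field_simp
      have step3 : 2 * |t - t'| / δ ≤ |t - t'| * (2 / δm) := by
        rw [show 2 * |t - t'| / δ = |t - t'| * (2 / δ) by ring]
        gcongr
      have step4 : 2 * |δ - δ'| / (δ * δ') ≤ |δ - δ'| * (2 / δm ^ 2) := by
        rw [show 2 * |δ - δ'| / (δ * δ') = |δ - δ'| * (2 / (δ * δ')) by ring]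
        gcongr
        nlinarith
      linarith
    calc |(t' - t) + (u - 2) * (t * δ' - t' * δ) / (δ * δ')|
        ≤ |t' - t| + |(u - 2) * (t * δ' - t' * δ) / (δ * δ')| := abs_add_le _ _
      _ ≤ |t - t'| + (|t - t'| * (2 / δm) + |δ - δ'| * (2 / δm ^ 2)) := by
          rw [abs_sub_comm t' t]; linarith
      _ = |t - t'| * (1 + 2 / δm) + |δ - δ'| * (2 / δm ^ 2) := by ring
  have hmain : |bF t δ u - bF t' δ' u| ≤
      max (|(1 - t / 2) * u - (1 - t' / 2) * u|)
        (|(u - t + t * (u - 2) / δ) - (u - t' + t' * (u - 2) / δ')|) := by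
    refine le_trans (abs_min_sub_min_le_max _ _ _ _) ?_
    rw [sub_self, abs_zero]
    rw [max_le_iff]
    refine ⟨le_max_of_le_left (abs_nonneg _), ?_⟩
    refine le_trans (abs_max_sub_max_le_max _ _ _ _) le_rfl
  have hd1 : (0:ℝ) ≤ 2 / δm := by positivity
  have hd2 : (0:ℝ) ≤ 2 / δm ^ 2 := by positivity
  have h1 := abs_nonneg (t - t')
  have h2 := abs_nonneg (δ - δ')
  rcases max_cases (|(1 - t / 2) * u - (1 - t' / 2) * u|)
      (|(u - t + t * (u - 2) / δ) - (u - t' + t' * (u - 2) / δ')|) with ⟨he, _⟩ | ⟨he, _⟩ <;>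
    rw [he] at hmain <;> nlinarith

end bFlemmas


abbrev Ico4 := ↥(Set.Ico (0:ℝ) 4)

section bIcoSec

variable {t δ : ℝ}

lemma bF_cont : Continuous (bF t δ) := by
  unfold bF; fun_prop

lemma bF_surj (ht0 : 0 ≤ t) (hδ0 : 0 < δ) (hδ1 : δ ≤ 1/2) {v : ℝ} (hv0 : 0 ≤ v) :
    ∃ u, 0 ≤ u ∧ u ≤ max v (2 + δ) ∧ bF t δ u = v := by
  have h0 : bF t δ 0 = 0 := bF_zero ht0 hδ0
  have h3 : bF t δ (v + 3) = v + 3 := bF_id_of_ge ht0 hδ0 (by linarith)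
  have hIcc : v ∈ Icc (bF t δ 0) (bF t δ (v + 3)) := by
    rw [h0, h3]; exact ⟨hv0, by linarith⟩
  obtain ⟨u, hu, hbu⟩ := intermediate_value_Icc (by linarith : (0:ℝ) ≤ v + 3)
    (bF_cont).continuousOn hIcc
  refine ⟨u, hu.1, ?_, hbu⟩
  rcases le_total u (2 + δ) with h | h
  · exact le_trans h (le_max_right _ _)
  · rw [bF_id_of_ge ht0 hδ0 h] at hbu
    rw [hbu]; exact le_max_left _ _

lemma bF_inj (ht0 : 0 ≤ t) (ht1 : t ≤ 1) (hδ0 : 0 < δ) {u v : ℝ}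
    (h : bF t δ u = bF t δ v) : u = v := by
  rcases le_total u v with huv | huv
  · have := bF_expand ht0 ht1 hδ0 huv; linarith
  · have := bF_expand ht0 ht1 hδ0 huv; linarith

noncomputable def bIco (ht0 : 0 ≤ t) (ht1 : t ≤ 1) (hδ0 : 0 < δ) (hδ1 : δ ≤ 1/2) :
    Ico4 ≃ Ico4 where
  toFun u := ⟨bF t δ u, bF_nonneg ht0 ht1 hδ0 u.2.1, lt_of_le_of_lt (bF_le _) u.2.2⟩
  invFun v := ⟨(bF_surj ht0 hδ0 hδ1 v.2.1).choose,
    (bF_surj ht0 hδ0 hδ1 v.2.1).choose_spec.1, by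
      have h2 := (bF_surj ht0 hδ0 hδ1 v.2.1).choose_spec.2.1
      have h4 : max (v:ℝ) (2 + δ) < 4 := by
        rw [max_lt_iff]; exact ⟨v.2.2, by linarith⟩
      exact lt_of_le_of_lt h2 h4⟩
  left_inv u := by
    apply Subtype.ext
    apply bF_inj ht0 ht1 hδ0
    exact (bF_surj ht0 hδ0 hδ1 (bF_nonneg ht0 ht1 hδ0 u.2.1)).choose_spec.2.2
  right_inv v := by
    apply Subtype.ext
    exact (bF_surj ht0 hδ0 hδ1 v.2.1).choose_spec.2.2

variable (ht0 : 0 ≤ t) (ht1 : t ≤ 1) (hδ0 : 0 < δ) (hδ1 : δ ≤ 1/2)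

lemma bIco_coe (u : Ico4) : (bIco ht0 ht1 hδ0 hδ1 u : ℝ) = bF t δ u := rfl

lemma bIco_symm_coe (v : Ico4) :
    bF t δ ((bIco ht0 ht1 hδ0 hδ1).symm v : ℝ) = v := by
  have := congrArg (Subtype.val) ((bIco ht0 ht1 hδ0 hδ1).right_inv v)
  exact this

lemma dist_Ico4 (u v : Ico4) : dist u v = |(u:ℝ) - v| := by
  rw [Subtype.dist_eq, Real.dist_eq]

lemma bIco_id_of_ge {u : Ico4} (hu : 5/2 ≤ (u:ℝ)) : bIco ht0 ht1 hδ0 hδ1 u = u := by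
  apply Subtype.ext
  exact bF_id_of_ge ht0 hδ0 (by linarith)

lemma bIco_symm_id_of_ge {u : Ico4} (hu : 5/2 ≤ (u:ℝ)) :
    (bIco ht0 ht1 hδ0 hδ1).symm u = u := by
  rw [Equiv.symm_apply_eq]
  exact (bIco_id_of_ge ht0 ht1 hδ0 hδ1 hu).symm

lemma bIco_t_zero (ht1' : (0:ℝ) ≤ 1) {u : Ico4} : bIco (le_refl 0) ht1' hδ0 hδ1 u = u := by
  apply Subtype.ext
  exact bF_t_zero u

lemma bIco_symm_le {v : Ico4} : (v:ℝ) ≤ ((bIco ht0 ht1 hδ0 hδ1).symm v : ℝ) := by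
  have h := bIco_symm_coe ht0 ht1 hδ0 hδ1 v
  have := bF_le (t := t) (δ := δ) ((bIco ht0 ht1 hδ0 hδ1).symm v : ℝ)
  linarith

lemma bIco_symm_lt_halffive {v : Ico4} (hv : (v:ℝ) < 5/2) :
    (((bIco ht0 ht1 hδ0 hδ1).symm v : ℝ)) < 5/2 := by
  by_contra hc
  push_neg at hc
  have := bIco_symm_id_of_ge ht0 ht1 hδ0 hδ1 (u := v) ?_
  · rw [this] at hc; linarith
  · have h := bIco_symm_coe ht0 ht1 hδ0 hδ1 v
    rw [bF_id_of_ge ht0 hδ0 (by linarith)] at h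
    linarith

lemma bIco_symm_le_of_le {v : Ico4} (hv : (v:ℝ) ≤ 2 + δ) :
    ((bIco ht0 ht1 hδ0 hδ1).symm v : ℝ) ≤ 2 + δ := by
  by_contra hc
  push_neg at hc
  have h := bIco_symm_coe ht0 ht1 hδ0 hδ1 v
  rw [bF_id_of_ge ht0 hδ0 hc.le] at h
  linarith

lemma bIco_symm_lip (u v : Ico4) :
    dist ((bIco ht0 ht1 hδ0 hδ1).symm u) ((bIco ht0 ht1 hδ0 hδ1).symm v) ≤ 2 * dist u v := by
  rw [dist_Ico4, dist_Ico4]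
  set a := (bIco ht0 ht1 hδ0 hδ1).symm u
  set b := (bIco ht0 ht1 hδ0 hδ1).symm v
  have ha := bIco_symm_coe ht0 ht1 hδ0 hδ1 u
  have hb := bIco_symm_coe ht0 ht1 hδ0 hδ1 v
  rcases le_total (a:ℝ) (b:ℝ) with h | h
  · have := bF_expand ht0 ht1 hδ0 h
    rw [ha, hb] at this
    rw [abs_of_nonpos (by linarith), abs_of_nonpos (by linarith)]
    linarith
  · have := bF_expand ht0 ht1 hδ0 h
    rw [ha, hb] at this
    rw [abs_of_nonneg (by linarith), abs_of_nonneg (by linarith)]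
    linarith

lemma bIco_cont : Continuous (fun u => bIco ht0 ht1 hδ0 hδ1 u) := by
  apply Continuous.subtype_mk
  exact bF_cont.comp continuous_subtype_val

lemma bIco_symm_cont : Continuous (fun u => (bIco ht0 ht1 hδ0 hδ1).symm u) := by
  apply LipschitzWith.continuous (K := 2)
  intro u v
  rw [edist_dist, edist_dist]
  have := bIco_symm_lip ht0 ht1 hδ0 hδ1 u v
  calc ENNReal.ofReal (dist _ _) ≤ ENNReal.ofReal (2 * dist u v) := ENNReal.ofReal_le_ofReal this
    _ = 2 * ENNReal.ofReal (dist u v) := by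
        rw [ENNReal.ofReal_mul (by norm_num)]
        norm_num

lemma bIco_symm_param {t' δ' δm : ℝ} (ht0' : 0 ≤ t') (ht1' : t' ≤ 1) (hδ0' : 0 < δ')
    (hδ1' : δ' ≤ 1/2) (hδm : 0 < δm) (hδa : δm ≤ δ) (hδb : δm ≤ δ') (v : Ico4) :
    dist ((bIco ht0 ht1 hδ0 hδ1).symm v) ((bIco ht0' ht1' hδ0' hδ1').symm v) ≤
      2 * ((|t - t'| + |δ - δ'|) * (3 + 2 / δm + 2 / δm ^ 2)) := by
  rw [dist_Ico4]
  set a := (bIco ht0 ht1 hδ0 hδ1).symm v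
  set b := (bIco ht0' ht1' hδ0' hδ1').symm v
  have ha := bIco_symm_coe ht0 ht1 hδ0 hδ1 v
  have hb := bIco_symm_coe ht0' ht1' hδ0' hδ1' v
  have hp : |bF t δ (b:ℝ) - bF t' δ' (b:ℝ)| ≤ (|t - t'| + |δ - δ'|) * (3 + 2 / δm + 2 / δm ^ 2) :=
    bF_param δm hδm hδa hδb ht0 ht0' ht1' b.2.1 (by linarith [b.2.2])
  have hq : bF t δ (b:ℝ) - bF t' δ' (b:ℝ) = bF t δ (b:ℝ) - bF t δ (a:ℝ) := by
    rw [ha, hb]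
  rcases le_total (a:ℝ) (b:ℝ) with h | h
  · have he := bF_expand ht0 ht1 hδ0 h
    have : |bF t δ (b:ℝ) - bF t δ (a:ℝ)| = bF t δ (b:ℝ) - bF t δ (a:ℝ) := by
      rw [abs_of_nonneg]; linarith
    rw [hq, this] at hp
    rw [abs_of_nonpos (by linarith)]
    linarith
  · have he := bF_expand ht0 ht1 hδ0 h
    have : |bF t δ (b:ℝ) - bF t δ (a:ℝ)| = -(bF t δ (b:ℝ) - bF t δ (a:ℝ)) := by
      rw [abs_of_nonpos]; linarith
    rw [hq, this] at hp
    rw [abs_of_nonneg (by linarith)]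
    linarith

lemma bIco_le_one_t1 (h01 : (0:ℝ) ≤ 1) (h11 : (1:ℝ) ≤ 1) {u : Ico4} (hu : (u:ℝ) ≤ 2) :
    ((bIco h01 h11 hδ0 hδ1 u : Ico4) : ℝ) ≤ 1 :=
  bF_le_one_of_t_one hδ0 hu

lemma bIco_forward_param (δm : ℝ) {t' δ' : ℝ} (ht0' : 0 ≤ t') (ht1' : t' ≤ 1) (hδ0' : 0 < δ')
    (hδ1' : δ' ≤ 1/2) (hδm : 0 < δm) (hδa : δm ≤ δ) (hδb : δm ≤ δ') (u : Ico4) :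
    dist (bIco ht0 ht1 hδ0 hδ1 u) (bIco ht0' ht1' hδ0' hδ1' u) ≤
      (|t - t'| + |δ - δ'|) * (3 + 2 / δm + 2 / δm ^ 2) := by
  rw [dist_Ico4]
  exact bF_param δm hδm hδa hδb ht0 ht0' ht1' u.2.1 (by linarith [u.2.2])

end bIcoSec

/-! ### The collar maps on `X` -/

section GamSec

variable {X : Type*} [MetricSpace X] {S : Set X}
variable (θ : ↥S × Ico4 → X)

/-- `N_a`. -/
def NS (a : ℝ) : Set X := θ '' (Set.univ ×ˢ {u : Ico4 | (u : ℝ) ≤ a})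

noncomputable def pre {θ : ↥S × Ico4 → X} {x : X} (hx : x ∈ range θ) : ↥S × Ico4 :=
  hx.choose

lemma theta_pre {θ : ↥S × Ico4 → X} {x : X} (hx : x ∈ range θ) : θ (pre hx) = x :=
  hx.choose_spec

open Classical in
noncomputable def Gam (f : Ico4 ≃ Ico4) (x : X) : X :=
  if hx : x ∈ range θ then θ ((pre hx).1, f (pre hx).2) else x

variable {θ}

lemma pre_theta (hinj : Injective θ) (p : ↥S × Ico4) {hx : θ p ∈ range θ} :
    pre hx = p :=
  hinj (theta_pre hx)

lemma Gam_theta (hinj : Injective θ) (f : Ico4 ≃ Ico4) (p : ↥S × Ico4) :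
    Gam θ f (θ p) = θ (p.1, f p.2) := by
  rw [Gam, dif_pos (mem_range_self p), pre_theta hinj]

lemma Gam_nmem (f : Ico4 ≃ Ico4) {x : X} (hx : x ∉ range θ) : Gam θ f x = x :=
  dif_neg hx

lemma Gam_mem (f : Ico4 ≃ Ico4) {x : X} (hx : x ∈ range θ) :
    Gam θ f x = θ ((pre hx).1, f (pre hx).2) := dif_pos hx

lemma Gam_Gam (hinj : Injective θ) (f g : Ico4 ≃ Ico4) (x : X) :
    Gam θ f (Gam θ g x) = Gam θ (g.trans f) x := by
  by_cases hx : x ∈ range θ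
  · obtain ⟨p, rfl⟩ := hx
    rw [Gam_theta hinj, Gam_theta hinj, Gam_theta hinj]
    rfl
  · rw [Gam_nmem _ hx, Gam_nmem _ hx, Gam_nmem _ hx]

lemma Gam_congr {f g : Ico4 ≃ Ico4} (h : ∀ u, f u = g u) (x : X) :
    Gam θ f x = Gam θ g x := by
  by_cases hx : x ∈ range θ
  · rw [Gam_mem _ hx, Gam_mem _ hx, h]
  · rw [Gam_nmem _ hx, Gam_nmem _ hx]

lemma Gam_refl (x : X) : Gam θ (Equiv.refl Ico4) x = x := by
  by_cases hx : x ∈ range θ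
  · rw [Gam_mem _ hx]
    simp only [Equiv.refl_apply]
    rw [show ((pre hx).1, (pre hx).2) = pre hx from rfl, theta_pre hx]
  · exact Gam_nmem _ hx

/-- `Gam` as an `Equiv` of `X`. -/
noncomputable def GamE (hinj : Injective θ) (f : Ico4 ≃ Ico4) : X ≃ X where
  toFun := Gam θ f
  invFun := Gam θ f.symm
  left_inv x := by
    rw [Gam_Gam hinj, show f.trans f.symm = Equiv.refl Ico4 from Equiv.self_trans_symm f]
    exact Gam_refl x
  right_inv x := by
    rw [Gam_Gam hinj, show f.symm.trans f = Equiv.refl Ico4 from Equiv.symm_trans_self f]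
    exact Gam_refl x

lemma theta_mem_NS {a : ℝ} (s : ↥S) {u : Ico4} (hu : (u:ℝ) ≤ a) : θ (s, u) ∈ NS θ a :=
  ⟨(s, u), ⟨mem_univ _, hu⟩, rfl⟩

lemma theta_mem_NS_iff (hinj : Injective θ) {a : ℝ} {p : ↥S × Ico4} :
    θ p ∈ NS θ a ↔ (p.2 : ℝ) ≤ a := by
  constructor
  · rintro ⟨q, ⟨-, hq⟩, he⟩
    rw [hinj he] at hq; exact hq
  · intro h; exact ⟨p, ⟨mem_univ _, h⟩, rfl⟩

lemma NS_subset_range (a : ℝ) : NS θ a ⊆ range θ := by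
  rintro x ⟨p, -, rfl⟩; exact ⟨p, rfl⟩

lemma NS_mono {a b : ℝ} (h : a ≤ b) : NS θ a ⊆ NS θ b := by
  rintro x ⟨p, ⟨-, hp⟩, rfl⟩; exact ⟨p, ⟨mem_univ _, le_trans hp h⟩, rfl⟩

lemma mem_NS_iff (hinj : Injective θ) {a : ℝ} {x : X} (hx : x ∈ range θ) :
    x ∈ NS θ a ↔ ((pre hx).2 : ℝ) ≤ a := by
  constructor
  · rintro ⟨p, ⟨-, hp⟩, he⟩
    have : pre hx = p := hinj (by rw [theta_pre hx, he])
    rw [this]; exact hp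
  · intro h
    refine ⟨pre hx, ⟨mem_univ _, h⟩, theta_pre hx⟩

/-- if `Gam θ f x ≠ x` then `x` is in the collar with coordinate `< 5/2`. -/
lemma Gam_moved {f : Ico4 ≃ Ico4} (hfix : ∀ u : Ico4, 5/2 ≤ (u:ℝ) → f u = u) {x : X}
    (h : Gam θ f x ≠ x) : ∃ hx : x ∈ range θ, ((pre hx).2 : ℝ) < 5/2 := by
  by_cases hx : x ∈ range θ
  · refine ⟨hx, ?_⟩
    by_contra hc
    push_neg at hc
    apply h
    rw [Gam_mem _ hx, hfix _ hc,
      show ((pre hx).1, (pre hx).2) = pre hx from rfl, theta_pre hx]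
  · exact absurd (Gam_nmem _ hx) h

variable (hθ : Topology.IsOpenEmbedding θ) (hS : IsCompact S)

include hθ in
lemma cont_pre : Continuous (fun y : range θ => pre y.2) := by
  have key : ∀ y : range θ, pre y.2 =
      (hθ.isEmbedding.toHomeomorph).symm y := by
    intro y
    apply hθ.isEmbedding.injective
    have h1 : θ ((hθ.isEmbedding.toHomeomorph).symm y) = (y : X) := by
      have := (hθ.isEmbedding.toHomeomorph).apply_symm_apply y
      exact congrArg Subtype.val this
    rw [h1, theta_pre y.2]
  rw [funext key]
  exact (hθ.isEmbedding.toHomeomorph).symm.continuous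

include hθ hS in
lemma NS_compact {a : ℝ} (ha0 : 0 ≤ a) (ha : a < 4) : IsCompact (NS θ a) := by
  haveI : CompactSpace ↥S := isCompact_iff_compactSpace.mp hS
  have hC : IsCompact {u : Ico4 | (u:ℝ) ≤ a} := by
    rw [Topology.IsEmbedding.isCompact_iff Topology.IsEmbedding.subtypeVal]
    have : Subtype.val '' {u : Ico4 | (u:ℝ) ≤ a} = Set.Icc 0 a := by
      ext v
      simp only [mem_image, mem_setOf_eq, mem_Icc]
      constructor
      · rintro ⟨u, hu, rfl⟩; exact ⟨u.2.1, hu⟩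
      · rintro ⟨h0, h1⟩
        exact ⟨⟨v, h0, lt_of_le_of_lt h1 ha⟩, h1, rfl⟩
    rw [this]
    exact isCompact_Icc
  exact (isCompact_univ.prod hC).image hθ.continuous

include hθ hS in
lemma Gam_cont (f : Ico4 ≃ Ico4) (hfc : Continuous (f : Ico4 → Ico4))
    (hfix : ∀ u : Ico4, 5/2 ≤ (u:ℝ) → f u = u) : Continuous (Gam θ f) := by
  rw [continuous_iff_continuousAt]
  intro x
  by_cases hx : x ∈ range θ
  · apply ContinuousOn.continuousAt _ (hθ.isOpen_range.mem_nhds hx)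
    rw [continuousOn_iff_continuous_restrict]
    have heq : (range θ).restrict (Gam θ f) =
        fun y : range θ => θ ((pre y.2).1, f (pre y.2).2) :=
      funext fun y => Gam_mem _ y.2
    rw [show (range θ).domRestrict (Gam θ f) = _ from heq]
    apply hθ.continuous.comp
    exact ((continuous_fst.comp (cont_pre hθ)).prodMk
      (hfc.comp (continuous_snd.comp (cont_pre hθ))))
  · have hreg : ∀ y, y ∉ NS θ (5/2) → Gam θ f y = y := by
      intro y hy
      by_cases hy2 : y ∈ range θ
      · obtain ⟨p, rfl⟩ := hy2
        rw [Gam_theta hθ.isEmbedding.injective]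
        rw [theta_mem_NS_iff hθ.isEmbedding.injective] at hy
        push_neg at hy
        rw [hfix _ hy.le]
      · exact Gam_nmem _ hy2
    have hnc : x ∉ NS θ (5/2) := fun hc => hx (NS_subset_range _ hc)
    have hopen : IsOpen (NS θ (5/2 : ℝ))ᶜ :=
      (NS_compact hθ hS (by norm_num) (by norm_num)).isClosed.isOpen_compl
    apply ContinuousAt.congr continuousAt_id
    exact Filter.eventuallyEq_of_mem (hopen.mem_nhds hnc) (fun y hy => (hreg y hy).symm)

include hS in
lemma uc_of_id_outside {K : Set X} (hK : IsCompact K) (g : X → X) (hg : Continuous g)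
    (hid : ∀ x ∉ K, g x = x) : UniformContinuous g := by
  rw [Metric.uniformContinuous_iff]
  by_contra hcon
  push_neg at hcon
  obtain ⟨ε, hε, hcex⟩ := hcon
  have hex : ∀ n : ℕ, ∃ a b : X, dist a b < 1/(n+1) ∧ ε ≤ dist (g a) (g b) ∧
      (a ∈ K ∨ ε ≤ 1/(n+1)) := by
    intro n
    obtain ⟨x, y, hxy, hge⟩ := hcex (1/(n+1)) (by positivity)
    by_cases hx : x ∈ K
    · exact ⟨x, y, hxy, hge, Or.inl hx⟩
    · by_cases hy : y ∈ K
      · exact ⟨y, x, by rwa [dist_comm], by rwa [dist_comm], Or.inl hy⟩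
      · refine ⟨x, y, hxy, hge, Or.inr ?_⟩
        rw [hid x hx, hid y hy] at hge
        linarith
  choose a b hab hgab hmem using hex
  obtain ⟨N, hN⟩ : ∃ N : ℕ, 1/((N:ℝ)+1) < ε := by
    obtain ⟨N, hN⟩ := exists_nat_gt (1/ε)
    refine ⟨N, ?_⟩
    rw [div_lt_iff₀ (by positivity)]
    rw [div_lt_iff₀ hε] at hN
    nlinarith
  have haK : ∀ n : ℕ, a (n + N) ∈ K := by
    intro n
    rcases hmem (n + N) with h | h
    · exact h
    · exfalso
      have h1 : 1/((n:ℝ) + N + 1) ≤ 1/((N:ℝ)+1) := by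
        apply div_le_div_of_nonneg_left (by norm_num) (by positivity) (by push_cast; linarith)
      push_cast at h
      linarith
  obtain ⟨z, hz, ψ, hψ, hza⟩ := hK.tendsto_subseq haK
  have hzb : Filter.Tendsto (fun n => b (ψ n + N)) Filter.atTop (nhds z) := by
    rw [tendsto_iff_dist_tendsto_zero]
    apply squeeze_zero (fun n => dist_nonneg)
      (g := fun n => dist (a (ψ n + N)) (b (ψ n + N)) + dist (a (ψ n + N)) z)
    · intro n
      calc dist (b (ψ n + N)) z ≤ dist (b (ψ n + N)) (a (ψ n + N)) + dist (a (ψ n + N)) z :=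
            dist_triangle _ _ _
        _ = _ := by rw [dist_comm (b _)]
    · have h1 : Filter.Tendsto (fun n => dist (a (ψ n + N)) (b (ψ n + N)))
          Filter.atTop (nhds 0) := by
        apply squeeze_zero (fun n => dist_nonneg) (g := fun n : ℕ => 1/((n:ℝ)+1))
        · intro n
          refine le_trans (hab _).le ?_
          apply div_le_div_of_nonneg_left (by norm_num) (by positivity)
          have h3 : (n:ℝ) ≤ ((ψ n : ℕ) : ℝ) := by exact_mod_cast hψ.le_apply
          push_cast
          linarith
        · have h4 := (tendsto_one_div_atTop_nhds_zero_nat (𝕜 := ℝ)).comp (Filter.tendsto_add_atTop_nat 1)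
          have h5 : ((fun n : ℕ => 1/(n:ℝ)) ∘ fun n => n + 1) = fun n : ℕ => 1/((n:ℝ)+1) := by
            funext n; simp [Function.comp]
          rwa [h5] at h4
      have h2 : Filter.Tendsto (fun n => dist (a (ψ n + N)) z) Filter.atTop (nhds 0) :=
        tendsto_iff_dist_tendsto_zero.mp hza
      have := h1.add h2
      simpa using this
  have hga : Filter.Tendsto (fun n => g (a (ψ n + N))) Filter.atTop (nhds (g z)) :=
    (hg.continuousAt.tendsto).comp hza
  have hgb : Filter.Tendsto (fun n => g (b (ψ n + N))) Filter.atTop (nhds (g z)) :=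
    (hg.continuousAt.tendsto).comp hzb
  have hd0 : Filter.Tendsto (fun n => dist (g (a (ψ n + N))) (g (b (ψ n + N))))
      Filter.atTop (nhds 0) := by
    have := hga.dist hgb
    simpa using this
  have hcontra := ge_of_tendsto hd0 (Filter.Eventually.of_forall (fun n => hgab (ψ n + N)))
  linarith


lemma Gam_id_outside (hinj : Injective θ) {f : Ico4 ≃ Ico4}
    (hfix : ∀ u : Ico4, 5/2 ≤ (u:ℝ) → f u = u) {x : X} (hx : x ∉ NS θ (5/2)) :
    Gam θ f x = x := by
  by_cases hy2 : x ∈ range θ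
  · obtain ⟨p, rfl⟩ := hy2
    rw [Gam_theta hinj]
    rw [theta_mem_NS_iff hinj] at hx
    push_neg at hx
    rw [hfix _ hx.le]
  · exact Gam_nmem _ hy2

include hθ hS in
lemma theta_mod {a : ℝ} (ha0 : 0 ≤ a) (ha : a < 4) : ∀ ε > 0, ∃ κ > 0,
    ∀ p q : ↥S × Ico4, (p.2:ℝ) ≤ a → (q.2:ℝ) ≤ a → dist p q ≤ κ → dist (θ p) (θ q) ≤ ε := by
  haveI : CompactSpace ↥S := isCompact_iff_compactSpace.mp hS
  have hC : IsCompact {u : Ico4 | (u:ℝ) ≤ a} := by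
    rw [Topology.IsEmbedding.isCompact_iff Topology.IsEmbedding.subtypeVal]
    have : Subtype.val '' {u : Ico4 | (u:ℝ) ≤ a} = Set.Icc 0 a := by
      ext v
      simp only [mem_image, mem_setOf_eq, mem_Icc]
      constructor
      · rintro ⟨u, hu, rfl⟩; exact ⟨u.2.1, hu⟩
      · rintro ⟨h0, h1⟩
        exact ⟨⟨v, h0, lt_of_le_of_lt h1 ha⟩, h1, rfl⟩
    rw [this]
    exact isCompact_Icc
  have hT : IsCompact ((univ : Set ↥S) ×ˢ {u : Ico4 | (u:ℝ) ≤ a}) := isCompact_univ.prod hC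
  have huc := hT.uniformContinuousOn_of_continuous hθ.continuous.continuousOn
  rw [Metric.uniformContinuousOn_iff_le] at huc
  intro ε hε
  obtain ⟨κ, hκ, h⟩ := huc ε hε
  exact ⟨κ, hκ, fun p q hp hq hd => h p ⟨mem_univ _, hp⟩ q ⟨mem_univ _, hq⟩ hd⟩

include hθ hS in
lemma pre_mod {a : ℝ} (ha0 : 0 ≤ a) (ha : a < 4) : ∀ ε > 0, ∃ κ > 0,
    ∀ (x y : X) (hx : x ∈ range θ) (hy : y ∈ range θ), x ∈ NS θ a → y ∈ NS θ a →
      dist x y ≤ κ → dist (pre hx) (pre hy) ≤ ε := by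
  have hK' : IsCompact {y : range θ | (y : X) ∈ NS θ a} := by
    rw [Topology.IsEmbedding.isCompact_iff Topology.IsEmbedding.subtypeVal]
    have himg : Subtype.val '' {y : range θ | (y : X) ∈ NS θ a} = NS θ a := by
      ext v
      simp only [mem_image, mem_setOf_eq]
      constructor
      · rintro ⟨u, hu, rfl⟩; exact hu
      · intro hv; exact ⟨⟨v, NS_subset_range a hv⟩, hv, rfl⟩
    rw [himg]
    exact NS_compact hθ hS ha0 ha
  have huc := hK'.uniformContinuousOn_of_continuous (cont_pre hθ).continuousOn
  rw [Metric.uniformContinuousOn_iff_le] at huc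
  intro ε hε
  obtain ⟨κ, hκ, h⟩ := huc ε hε
  refine ⟨κ, hκ, fun x y hx hy hxa hya hd => ?_⟩
  exact h ⟨x, hx⟩ hxa ⟨y, hy⟩ hya (by rw [Subtype.dist_eq]; exact hd)

include hθ hS in
lemma gap_lem : ∃ ρ > 0, ∀ x ∈ NS θ (5/2), ∀ y : X, dist x y ≤ ρ →
    ∃ hy : y ∈ range θ, ((pre hy).2 : ℝ) ≤ 27/10 := by
  have hU : IsOpen (θ '' ((univ : Set ↥S) ×ˢ {u : Ico4 | (u:ℝ) < 27/10})) := by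
    apply hθ.isOpenMap
    apply IsOpen.prod isOpen_univ
    exact isOpen_Iio.preimage continuous_subtype_val
  have hsub : NS θ (5/2) ⊆ θ '' ((univ : Set ↥S) ×ˢ {u : Ico4 | (u:ℝ) < 27/10}) := by
    rintro x ⟨p, ⟨-, hp⟩, rfl⟩
    exact ⟨p, ⟨mem_univ _, by norm_num at hp ⊢; linarith⟩, rfl⟩
  obtain ⟨ρ0, hρ0, hth⟩ := (NS_compact hθ hS (by norm_num) (by norm_num)).exists_thickening_subset_open hU hsub
  refine ⟨ρ0/2, by linarith, fun x hx y hd => ?_⟩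
  have hyU : y ∈ θ '' ((univ : Set ↥S) ×ˢ {u : Ico4 | (u:ℝ) < 27/10}) := by
    apply hth
    rw [Metric.mem_thickening_iff]
    exact ⟨x, hx, by rw [dist_comm]; linarith⟩
  obtain ⟨q, ⟨-, hq⟩, rfl⟩ := hyU
  refine ⟨mem_range_self q, ?_⟩
  rw [pre_theta hθ.isEmbedding.injective]
  exact hq.le

include hθ hS in
lemma equi_lem : ∀ ε > 0, ∃ κ > 0, ∀ g : Ico4 ≃ Ico4,
    (∀ u v : Ico4, dist (g u) (g v) ≤ 2 * dist u v) →
    (∀ u : Ico4, 5/2 ≤ (u:ℝ) → g u = u) →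
    (∀ u : Ico4, (u:ℝ) < 5/2 → ((g u : Ico4) : ℝ) < 5/2) →
    ∀ x y : X, dist x y ≤ κ → dist (Gam θ g x) (Gam θ g y) ≤ ε := by
  intro ε hε
  obtain ⟨κθ, hκθ, hθm⟩ := theta_mod hθ hS (a := 27/10) (by norm_num) (by norm_num) ε hε
  obtain ⟨κp, hκp, hpm⟩ := pre_mod hθ hS (a := 27/10) (by norm_num) (by norm_num) (κθ/2) (by linarith)
  obtain ⟨ρ, hρ, hgap⟩ := gap_lem hθ hS
  have hinj := hθ.isEmbedding.injective
  refine ⟨min (min κp ρ) ε, by positivity, fun g hgl hgf hgm x y hd => ?_⟩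
  have key : ∀ x y : X, Gam θ g x ≠ x → dist x y ≤ min (min κp ρ) ε →
      dist (Gam θ g x) (Gam θ g y) ≤ ε := by
    intro x y hmx hd
    obtain ⟨hx, hx5⟩ := Gam_moved hgf hmx
    have hxm : x ∈ NS θ (5/2) := by
      rw [mem_NS_iff hinj hx]; exact hx5.le
    obtain ⟨hy, hy27⟩ := hgap x hxm y (le_trans hd (le_trans (min_le_left _ _) (min_le_right _ _)))
    have hxm27 : x ∈ NS θ (27/10) := NS_mono (by norm_num) hxm
    have hym27 : y ∈ NS θ (27/10) := by
      rw [mem_NS_iff hinj hy]; exact hy27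
    have hpd : dist (pre hx) (pre hy) ≤ κθ/2 :=
      hpm x y hx hy hxm27 hym27 (le_trans hd (le_trans (min_le_left _ _) (min_le_left _ _)))
    rw [Gam_mem _ hx, Gam_mem _ hy]
    apply hθm
    · -- first coordinate bound
      have : ((g (pre hx).2 : Ico4) : ℝ) < 5/2 := hgm _ hx5
      norm_num at this ⊢; linarith
    · rcases lt_or_ge ((pre hy).2 : ℝ) (5/2) with h | h
      · have := hgm _ h; norm_num at this ⊢; linarith
      · rw [hgf _ h]; exact hy27
    · rw [Prod.dist_eq] at hpd ⊢
      simp only [max_le_iff] at hpd ⊢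
      refine ⟨le_trans hpd.1 (by linarith), ?_⟩
      calc dist (g (pre hx).2) (g (pre hy).2) ≤ 2 * dist (pre hx).2 (pre hy).2 := hgl _ _
        _ ≤ 2 * (κθ/2) := by nlinarith [hpd.2]
        _ = κθ := by ring
  by_cases hmx : Gam θ g x = x
  · by_cases hmy : Gam θ g y = y
    · rw [hmx, hmy]
      exact le_trans hd (le_trans (min_le_right _ _) le_rfl)
    · rw [dist_comm]
      exact key y x hmy (by rwa [dist_comm])
  · exact key x y hmx hd

include hθ hS in
lemma close_lem : ∀ ε > 0, ∃ κ > 0, ∀ g g' : Ico4 ≃ Ico4,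
    (∀ u : Ico4, 5/2 ≤ (u:ℝ) → g u = u) → (∀ u : Ico4, 5/2 ≤ (u:ℝ) → g' u = u) →
    (∀ u : Ico4, (u:ℝ) < 5/2 → ((g u : Ico4) : ℝ) < 5/2) →
    (∀ u : Ico4, (u:ℝ) < 5/2 → ((g' u : Ico4) : ℝ) < 5/2) →
    (∀ u : Ico4, dist (g u) (g' u) ≤ κ) →
    ∀ x : X, dist (Gam θ g x) (Gam θ g' x) ≤ ε := by
  intro ε hε
  obtain ⟨κθ, hκθ, hθm⟩ := theta_mod hθ hS (a := 5/2) (by norm_num) (by norm_num) ε hε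
  refine ⟨κθ, hκθ, fun g g' hgf hgf' hgm hgm' hcl x => ?_⟩
  by_cases hx : x ∈ range θ
  · rcases lt_or_ge ((pre hx).2 : ℝ) (5/2) with h | h
    · rw [Gam_mem _ hx, Gam_mem _ hx]
      apply hθm
      · exact (hgm _ h).le
      · exact (hgm' _ h).le
      · rw [Prod.dist_eq]
        simp only [max_le_iff]
        exact ⟨by rw [dist_self]; linarith, hcl _⟩
    · rw [Gam_mem _ hx, Gam_mem _ hx, hgf _ h, hgf' _ h, dist_self]
      linarith
  · rw [Gam_nmem _ hx, Gam_nmem _ hx, dist_self]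
    linarith

include hθ hS in
lemma disp_lem : ∃ C : ℝ, 0 ≤ C ∧ ∀ g : Ico4 ≃ Ico4,
    (∀ u : Ico4, 5/2 ≤ (u:ℝ) → g u = u) →
    (∀ u : Ico4, (u:ℝ) < 5/2 → ((g u : Ico4) : ℝ) < 5/2) →
    ∀ x : X, dist (Gam θ g x) x ≤ C := by
  have hb := (NS_compact hθ hS (a := 5/2) (by norm_num) (by norm_num)).isBounded
  refine ⟨Metric.diam (NS θ (5/2)), Metric.diam_nonneg, fun g hgf hgm x => ?_⟩
  by_cases hmx : Gam θ g x = x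
  · rw [hmx, dist_self]; exact Metric.diam_nonneg
  · obtain ⟨hx, hx5⟩ := Gam_moved hgf hmx
    have hinj := hθ.isEmbedding.injective
    have hxm : x ∈ NS θ (5/2) := by rw [mem_NS_iff hinj hx]; exact hx5.le
    have hgm2 : Gam θ g x ∈ NS θ (5/2) := by
      rw [Gam_mem _ hx]
      exact theta_mem_NS _ (hgm _ hx5).le
    exact Metric.dist_le_diam_of_mem hb hgm2 hxm

/-- `Gam` as a uniform equivalence. -/
noncomputable def GamUE (g : Ico4 ≃ Ico4) (hgc : Continuous (g : Ico4 → Ico4))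
    (hgc' : Continuous (g.symm : Ico4 → Ico4))
    (hgf : ∀ u : Ico4, 5/2 ≤ (u:ℝ) → g u = u) : X ≃ᵤ X where
  toEquiv := GamE hθ.isEmbedding.injective g
  uniformContinuous_toFun := by
    apply uc_of_id_outside hS (NS_compact hθ hS (a := 5/2) (by norm_num) (by norm_num))
      _ (Gam_cont hθ hS g hgc hgf)
    intro x hx
    exact Gam_id_outside hθ.isEmbedding.injective hgf hx
  uniformContinuous_invFun := by
    have hgf' : ∀ u : Ico4, 5/2 ≤ (u:ℝ) → g.symm u = u := by
      intro u hu
      rw [Equiv.symm_apply_eq]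
      exact (hgf u hu).symm
    apply uc_of_id_outside hS (NS_compact hθ hS (a := 5/2) (by norm_num) (by norm_num))
      _ (Gam_cont hθ hS g.symm hgc' hgf')
    intro x hx
    exact Gam_id_outside hθ.isEmbedding.injective hgf' hx

lemma GamUE_apply (g : Ico4 ≃ Ico4) (hgc : Continuous (g : Ico4 → Ico4))
    (hgc' : Continuous (g.symm : Ico4 → Ico4))
    (hgf : ∀ u : Ico4, 5/2 ≤ (u:ℝ) → g u = u) (x : X) :
    GamUE hθ hS g hgc hgc' hgf x = Gam θ g x := rfl

lemma GamUE_symm_apply (g : Ico4 ≃ Ico4) (hgc : Continuous (g : Ico4 → Ico4))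
    (hgc' : Continuous (g.symm : Ico4 → Ico4))
    (hgf : ∀ u : Ico4, 5/2 ≤ (u:ℝ) → g u = u) (x : X) :
    (GamUE hθ hS g hgc hgc' hgf).symm x = Gam θ g.symm x := rfl

end GamSec
end SDR14

open SDR14

set_option maxHeartbeats 2000000 in
/-- Lemma 2.8: given a compact set `S` with an open collar neighborhood
`θ : S × [0,4) ≅ N`, the group `H^u_{N_1}(X)_b` strong deformation retracts onto
`H^u_{N_2}(X)_b`, supported in `N_3`. -/
theorem stmt_14 {X : Type*} [MetricSpace X] (S : Set X) (hS : IsCompact S)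
    (θ : ↥S × ↥(Set.Ico (0:ℝ) 4) → X)
    (hθ : Topology.IsOpenEmbedding θ)
    (hθ0 : ∀ x : ↥S, θ (x, ⟨0, by norm_num⟩) = (x : X)) :
    -- `N_a = θ(S × [0,a])`
    let N : ℝ → Set X := fun a =>
      θ '' (Set.univ ×ˢ {u : ↥(Set.Ico (0:ℝ) 4) | (u : ℝ) ≤ a})
    -- `H^u_{N_a}(X)_b`
    let G : ℝ → Set (X ≃ᵤ X) := fun a =>
      {h | (∃ C : ℝ, ∀ x, dist (h x) x ≤ C) ∧ ∀ x ∈ N a, h x = x}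
    ∃ φ : ↥(G 1) × I → ↥(G 1),
      Continuous φ ∧
      (∀ h, φ (h, 0) = h) ∧
      (∀ h, (φ (h, 1)).1 ∈ G 2) ∧
      (∀ h : ↥(G 1), h.1 ∈ G 2 → ∀ t : I, φ (h, t) = h) ∧
      (∀ (h : ↥(G 1)) (t : I) (x : X),
        h.1 x ∉ N 3 → x ∉ N 3 → (φ (h, t)).1 x = h.1 x) := by
  classical
  intro N G
  have hinj : Injective θ := hθ.isEmbedding.injective
  -- identify N with NS
  have hN : ∀ a : ℝ, N a = NS θ a := fun a => rfl
  -- the sup-displacement over N 2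
  set D : (X ≃ᵤ X) → ℝ := fun h => sSup ((fun x => dist (h x) x) '' NS θ 2) with hDdef
  have hNS2compact : IsCompact (NS θ 2) := NS_compact hθ hS (by norm_num) (by norm_num)
  have hDbdd : ∀ h : X ≃ᵤ X, BddAbove ((fun x => dist (h x) x) '' NS θ 2) := fun h =>
    (hNS2compact.image (h.continuous.dist continuous_id)).bddAbove
  have hDnonneg : ∀ h : X ≃ᵤ X, 0 ≤ D h := by
    intro h
    apply Real.sSup_nonneg
    rintro y ⟨x, -, rfl⟩
    exact dist_nonneg
  have hDle : ∀ (h : X ≃ᵤ X) (x : X), x ∈ NS θ 2 → dist (h x) x ≤ D h := by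
    intro h x hx
    exact le_csSup (hDbdd h) ⟨x, hx, rfl⟩
  have hDzero : ∀ h : X ≃ᵤ X, D h = 0 ↔ ∀ x ∈ NS θ 2, h x = x := by
    intro h
    constructor
    · intro h0 x hx
      have := hDle h x hx
      rw [h0] at this
      rw [← dist_le_zero]
      exact this
    · intro hfix
      apply le_antisymm _ (hDnonneg h)
      apply Real.sSup_le _ le_rfl
      rintro y ⟨x, hx, rfl⟩
      show dist (h x) x ≤ 0
      rw [hfix x hx, dist_self]
  have hDdiff : ∀ (h h' : X ≃ᵤ X) (η : ℝ), 0 ≤ η → (∀ x, dist (h x) (h' x) ≤ η) →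
      D h ≤ D h' + η := by
    intro h h' η hη hcl
    apply Real.sSup_le _ (by linarith [hDnonneg h'])
    rintro y ⟨x, hx, rfl⟩
    calc dist (h x) x ≤ dist (h x) (h' x) + dist (h' x) x := dist_triangle _ _ _
      _ ≤ η + D h' := add_le_add (hcl x) (hDle h' x hx)
      _ = D h' + η := by ring
  -- the coordinate squeeze for given params
  have hbbmk : ∀ (t : I) (h : X ≃ᵤ X), D h ≠ 0 →
      0 < min (1/2) (D h) ∧ min (1/2) (D h) ≤ 1/2 := by
    intro t h hD
    constructor
    · apply lt_min (by norm_num)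
      cases' lt_or_eq_of_le (hDnonneg h) with h1 h1
      · exact h1
      · exact absurd h1.symm hD
    · exact min_le_left _ _
  -- abbreviation for the squeeze equiv
  let bb : ∀ (t : I) (h : X ≃ᵤ X), D h ≠ 0 → (Ico4 ≃ Ico4) := fun t h hD =>
    bIco (t := (t:ℝ)) (δ := min (1/2) (D h)) t.2.1 t.2.2 (hbbmk t h hD).1 (hbbmk t h hD).2
  -- facts about bb
  have hbbfix : ∀ (t : I) (h : X ≃ᵤ X) (hD : D h ≠ 0) (u : Ico4), 5/2 ≤ (u:ℝ) →
      bb t h hD u = u := fun t h hD u hu => bIco_id_of_ge _ _ _ _ hu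
  have hbbmaps : ∀ (t : I) (h : X ≃ᵤ X) (hD : D h ≠ 0) (u : Ico4), (u:ℝ) < 5/2 →
      ((bb t h hD u : Ico4) : ℝ) < 5/2 := by
    intro t h hD u hu
    have := bF_le (t := (t:ℝ)) (δ := min (1/2) (D h)) (u:ℝ)
    have hc : ((bb t h hD u : Ico4) : ℝ) = bF (t:ℝ) (min (1/2) (D h)) (u:ℝ) := rfl
    linarith [hc ▸ this]
  have hbbsymmfix : ∀ (t : I) (h : X ≃ᵤ X) (hD : D h ≠ 0) (u : Ico4), 5/2 ≤ (u:ℝ) →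
      (bb t h hD).symm u = u := fun t h hD u hu => bIco_symm_id_of_ge _ _ _ _ hu
  have hbbsymmmaps : ∀ (t : I) (h : X ≃ᵤ X) (hD : D h ≠ 0) (u : Ico4), (u:ℝ) < 5/2 →
      (((bb t h hD).symm u : Ico4) : ℝ) < 5/2 :=
    fun t h hD u hu => bIco_symm_lt_halffive _ _ _ _ hu
  -- the collar squeeze as uniform equivalence
  let gam : ∀ (t : I) (h : X ≃ᵤ X), D h ≠ 0 → (X ≃ᵤ X) := fun t h hD =>
    GamUE hθ hS (bb t h hD)
      (bIco_cont t.2.1 t.2.2 (hbbmk t h hD).1 (hbbmk t h hD).2)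
      (bIco_symm_cont t.2.1 t.2.2 (hbbmk t h hD).1 (hbbmk t h hD).2)
      (hbbfix t h hD)
  -- the conjugate
  let conj : ∀ (t : I) (h : X ≃ᵤ X), D h ≠ 0 → (X ≃ᵤ X) := fun t h hD =>
    ((gam t h hD).trans h).trans (gam t h hD).symm
  have hconj_apply : ∀ (t : I) (h : X ≃ᵤ X) (hD : D h ≠ 0) (x : X),
      conj t h hD x = Gam θ (bb t h hD).symm (h (Gam θ (bb t h hD) x)) := fun _ _ _ _ => rfl
  -- the inverse composition identity
  have hGG : ∀ (t : I) (h : X ≃ᵤ X) (hD : D h ≠ 0) (x : X),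
      Gam θ (bb t h hD).symm (Gam θ (bb t h hD) x) = x := by
    intro t h hD x
    rw [Gam_Gam hinj, show (bb t h hD).trans (bb t h hD).symm = Equiv.refl Ico4 from
      Equiv.self_trans_symm _]
    exact Gam_refl x
  -- γ moves only within NS(5/2) ⊆ NS 3, and preserves levels
  obtain ⟨Cd, hCd0, hCd⟩ := disp_lem hθ hS
  -- membership of the conjugate in G 1
  have hmemG1 : ∀ (t : I) (h : ↥(G 1)) (hD : D h.1 ≠ 0), conj t h.1 hD ∈ G 1 := by
    intro t h hD
    have hfix1 : ∀ x ∈ NS θ 1, h.1 x = x := h.2.2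
    obtain ⟨C, hC⟩ := h.2.1
    constructor
    · -- bounded displacement
      refine ⟨Cd + C + Cd, fun x => ?_⟩
      rw [hconj_apply t h.1 hD x]
      calc dist (Gam θ (bb t h.1 hD).symm (h.1 (Gam θ (bb t h.1 hD) x))) x
          ≤ dist (Gam θ (bb t h.1 hD).symm (h.1 (Gam θ (bb t h.1 hD) x)))
              (h.1 (Gam θ (bb t h.1 hD) x)) +
            dist (h.1 (Gam θ (bb t h.1 hD) x)) (Gam θ (bb t h.1 hD) x) +
            dist (Gam θ (bb t h.1 hD) x) x := dist_triangle4 _ _ _ _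
        _ ≤ Cd + C + Cd := by
            gcongr
            · exact hCd _ (hbbsymmfix t h.1 hD) (hbbsymmmaps t h.1 hD) _
            · exact hC _
            · exact hCd _ (hbbfix t h.1 hD) (hbbmaps t h.1 hD) _
    · -- fixes N 1
      intro x hx
      rw [hN 1] at hx
      obtain ⟨p, ⟨-, hp⟩, rfl⟩ := hx
      rw [hconj_apply t h.1 hD _, Gam_theta hinj]
      have hmem1 : θ (p.1, bb t h.1 hD p.2) ∈ NS θ 1 := by
        apply theta_mem_NS
        have : ((bb t h.1 hD p.2 : Ico4) : ℝ) = bF (t:ℝ) (min (1/2) (D h.1)) (p.2:ℝ) := rfl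
        rw [this]
        exact le_trans (bF_le _) hp
      rw [hfix1 _ hmem1, ← Gam_theta hinj (bb t h.1 hD) p, hGG t h.1 hD]
  -- the homotopy
  set φ : ↥(G 1) × I → ↥(G 1) := fun w =>
    if hD : D w.1.1 = 0 then w.1 else ⟨conj w.2 w.1.1 hD, hmemG1 w.2 w.1 hD⟩ with hφdef
  have hφpos : ∀ w : ↥(G 1) × I, D w.1.1 = 0 → φ w = w.1 := by
    intro w hD
    rw [hφdef]
    exact dif_pos hD
  have hφneg : ∀ (w : ↥(G 1) × I) (hD : D w.1.1 ≠ 0),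
      ((φ w).1 : X ≃ᵤ X) = conj w.2 w.1.1 hD := by
    intro w hD
    rw [hφdef]
    exact congrArg Subtype.val (dif_neg hD)
  -- id-off lemmas for the squeeze at threshold 2+δ
  have hgidF : ∀ (t : I) (h : X ≃ᵤ X) (hD : D h ≠ 0) (v : Ico4),
      2 + min (1/2) (D h) ≤ (v:ℝ) → bb t h hD v = v := by
    intro t h hD v hv
    exact Subtype.ext (bF_id_of_ge t.2.1 (hbbmk t h hD).1 hv)
  have hgidS : ∀ (t : I) (h : X ≃ᵤ X) (hD : D h ≠ 0) (v : Ico4),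
      2 + min (1/2) (D h) ≤ (v:ℝ) → (bb t h hD).symm v = v := by
    intro t h hD v hv
    rw [Equiv.symm_apply_eq]
    exact (hgidF t h hD v hv).symm
  refine ⟨φ, ?_, ?_, ?_, ?_, ?_⟩
  · -- continuity
    -- eventual closeness in the product neighborhood filter
    have hbase : ∀ (w₀ : ↥(G 1) × I) (η : ℝ), 0 < η → ∀ᶠ w : ↥(G 1) × I in nhds w₀,
        (∀ x : X, dist (w.1.1 x) (w₀.1.1 x) < η) ∧ |((w.2 : ℝ)) - ((w₀.2 : ℝ))| < η := by
      intro w₀ η hη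
      have hc1 : Continuous (fun w : ↥(G 1) × I => UniformFun.ofFun (⇑(w.1.1) : X → X)) := by
        have hc0 : Continuous (fun h : X ≃ᵤ X => UniformFun.ofFun (⇑h : X → X)) :=
          continuous_induced_dom
        have hv : Continuous (fun w : ↥(G 1) × I => (w.1.1 : X ≃ᵤ X)) :=
          continuous_subtype_val.comp continuous_fst
        exact hc0.comp hv
      have ht1 : Filter.Tendsto (fun w : ↥(G 1) × I => UniformFun.ofFun (⇑(w.1.1) : X → X))
          (nhds w₀) (nhds (UniformFun.ofFun (⇑(w₀.1.1) : X → X))) := hc1.continuousAt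
      rw [UniformFun.tendsto_iff_tendstoUniformly] at ht1
      have hev1 := (Metric.tendstoUniformly_iff.mp ht1) η hη
      have hc2 : Continuous (fun w : ↥(G 1) × I => ((w.2 : ℝ))) :=
        continuous_subtype_val.comp continuous_snd
      have hev2 : ∀ᶠ w : ↥(G 1) × I in nhds w₀, |((w.2:ℝ)) - ((w₀.2:ℝ))| < η := by
        have ht2 : Filter.Tendsto (fun w : ↥(G 1) × I => ((w.2:ℝ))) (nhds w₀)
            (nhds ((w₀.2:ℝ))) := hc2.continuousAt
        have := Metric.tendsto_nhds.mp ht2 η hη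
        filter_upwards [this] with w hw
        rw [Real.dist_eq] at hw
        exact hw
      filter_upwards [hev1, hev2] with w hw1 hw2
      exact ⟨fun x => by rw [dist_comm]; exact hw1 x, hw2⟩
    -- the key uniform-closeness estimate
    have hkey : ∀ w₀ : ↥(G 1) × I, ∀ ε : ℝ, 0 < ε → ∀ᶠ w : ↥(G 1) × I in nhds w₀,
        ∀ x : X, dist (((φ w₀).1) x) (((φ w).1) x) < ε := by
      rintro ⟨h₀, t₀⟩ ε hε
      by_cases hD₀ : D h₀.1 = 0
      · -- CASE B : h₀ in the subgroup G 2
        have hfix2 : ∀ z ∈ NS θ 2, h₀.1 z = z := (hDzero h₀.1).mp hD₀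
        have hout : ∀ z : X, z ∉ NS θ 2 → h₀.1 z ∉ NS θ 2 := by
          intro z hz hmem
          apply hz
          have h1 : h₀.1 (h₀.1 z) = h₀.1 z := hfix2 _ hmem
          have h2 : h₀.1 z = z := h₀.1.toEquiv.injective h1
          rwa [h2] at hmem
        obtain ⟨κe, hκe, he⟩ := equi_lem hθ hS (ε/8) (by positivity)
        obtain ⟨κh, hκh, hhm⟩ := Metric.uniformContinuous_iff.mp
          (h₀.1.uniformContinuous) (ε/8) (by positivity)
        set εθ := min (ε/8) (min (κh/2) κe) with hεθdef
        have hεθ : 0 < εθ := by positivity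
        have hεθ1 : εθ ≤ ε/8 := min_le_left _ _
        have hεθ2 : εθ ≤ κh/2 := le_trans (min_le_right _ _) (min_le_left _ _)
        have hεθ3 : εθ ≤ κe := le_trans (min_le_right _ _) (min_le_right _ _)
        obtain ⟨κθ, hκθ, hθm⟩ := theta_mod hθ hS (a := 27/10) (by norm_num) (by norm_num) εθ hεθ
        obtain ⟨κp, hκp, hpm⟩ := pre_mod hθ hS (a := 27/10) (by norm_num) (by norm_num)
          (κθ/2) (by positivity)
        obtain ⟨ρ, hρ, hgap⟩ := gap_lem hθ hS
        set η := min (min (ε/8) (min κe (κθ/2))) (min κp (min ρ κh)) with hηdef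
        have hη : 0 < η := by positivity
        have hη1 : η ≤ ε/8 := le_trans (min_le_left _ _) (min_le_left _ _)
        have hη2 : η ≤ κe := le_trans (min_le_left _ _)
          (le_trans (min_le_right _ _) (min_le_left _ _))
        have hη3 : η ≤ κθ/2 := le_trans (min_le_left _ _)
          (le_trans (min_le_right _ _) (min_le_right _ _))
        have hη4 : η ≤ κp := le_trans (min_le_right _ _) (min_le_left _ _)
        have hη5 : η ≤ ρ := le_trans (min_le_right _ _)
          (le_trans (min_le_right _ _) (min_le_left _ _))
        have hη6 : η ≤ κh := le_trans (min_le_right _ _)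
          (le_trans (min_le_right _ _) (min_le_right _ _))
        filter_upwards [hbase (h₀, t₀) η hη] with w hw
        obtain ⟨hwcl, -⟩ := hw
        intro x
        have hφ₀ : ((φ (h₀, t₀)).1 : X ≃ᵤ X) = h₀.1 :=
          congrArg Subtype.val (hφpos (h₀, t₀) hD₀)
        rw [hφ₀]
        by_cases hDw : D w.1.1 = 0
        · have hφw : ((φ w).1 : X ≃ᵤ X) = w.1.1 :=
            congrArg Subtype.val (hφpos w hDw)
          rw [hφw, dist_comm]
          exact lt_of_lt_of_le (hwcl x) (by linarith)
        · rw [hφneg w hDw]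
          set t := w.2
          set h := w.1
          set δ := min (1/2) (D h.1) with hδdef
          set g := bb t h.1 hDw with hgdef
          have hδ0 : 0 < δ := (hbbmk t h.1 hDw).1
          have hδη : δ ≤ η := by
            have := hDdiff h.1 h₀.1 η hη.le (fun z => (hwcl z).le)
            rw [hD₀] at this
            calc δ ≤ D h.1 := min_le_right _ _
              _ ≤ η := by linarith
          -- auxiliary : the inverse squeeze barely moves points outside NS 2
          have key2 : ∀ z : X, z ∉ NS θ 2 → dist (Gam θ g.symm (h.1 z)) (h.1 z) ≤ εθ := by
            intro z hz
            by_cases hmz : Gam θ g.symm (h.1 z) = h.1 z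
            · rw [hmz, dist_self]; exact hεθ.le
            · obtain ⟨hy, hy5⟩ := Gam_moved (hbbsymmfix t h.1 hDw) hmz
              have hmem5 : h.1 z ∈ NS θ (5/2) := by
                rw [mem_NS_iff hinj hy]; exact hy5.le
              have hz0 : h₀.1 z ∉ NS θ 2 := hout z hz
              obtain ⟨hy₀, h27₀⟩ := hgap (h.1 z) hmem5 (h₀.1 z)
                (le_trans (hwcl z).le hη5)
              have hmem27 : h.1 z ∈ NS θ (27/10) := NS_mono (by norm_num) hmem5
              have hmem27' : h₀.1 z ∈ NS θ (27/10) := by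
                rw [mem_NS_iff hinj hy₀]; exact h27₀
              have hpd : dist (pre hy) (pre hy₀) ≤ κθ/2 :=
                hpm (h.1 z) (h₀.1 z) hy hy₀ hmem27 hmem27' (le_trans (hwcl z).le hη4)
              have hcoord : |((pre hy).2 : ℝ) - ((pre hy₀).2 : ℝ)| ≤ κθ/2 := by
                have h1 : dist (pre hy).2 (pre hy₀).2 ≤ dist (pre hy) (pre hy₀) := by
                  rw [Prod.dist_eq]; exact le_max_right _ _
                rw [Subtype.dist_eq, Real.dist_eq] at h1
                linarith
              have hcoord₀ : 2 < ((pre hy₀).2 : ℝ) := by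
                by_contra hc
                push_neg at hc
                exact hz0 (by rw [mem_NS_iff hinj hy₀]; exact hc)
              have hcy : 2 - κθ/2 ≤ ((pre hy).2 : ℝ) := by
                rw [abs_le] at hcoord
                linarith [hcoord.1]
              have hylt : ((pre hy).2 : ℝ) < 2 + δ := by
                by_contra hc
                push_neg at hc
                apply hmz
                rw [Gam_mem _ hy, hgidS t h.1 hDw _ hc,
                  show ((pre hy).1, (pre hy).2) = pre hy from rfl, theta_pre hy]
              set wv := g.symm (pre hy).2 with hwvdef
              have hwv1 : ((pre hy).2 : ℝ) ≤ (wv : ℝ) := bIco_symm_le _ _ _ _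
              have hwv2 : (wv : ℝ) ≤ 2 + δ := bIco_symm_le_of_le _ _ _ _ hylt.le
              have hd1 : dist (Gam θ g.symm (h.1 z)) (h.1 z) =
                  dist (θ ((pre hy).1, wv)) (θ (pre hy)) := by
                rw [Gam_mem _ hy, theta_pre hy]
              rw [hd1]
              apply hθm
              · show (wv : ℝ) ≤ 27/10
                have : δ ≤ 1/2 := min_le_left _ _
                linarith
              · show ((pre hy).2 : ℝ) ≤ 27/10
                linarith
              · rw [Prod.dist_eq, max_le_iff]
                constructor
                · show dist ((pre hy).1, wv).1 (pre hy).1 ≤ κθ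
                  dsimp only
                  rw [dist_self]; linarith [hκθ]
                · show dist ((pre hy).1, wv).2 (pre hy).2 ≤ κθ
                  dsimp only
                  rw [Subtype.dist_eq, Real.dist_eq, abs_le]
                  constructor <;> nlinarith [hη3, hδη]
          -- main case split for the point x
          have hconjx : conj t h.1 hDw x = Gam θ g.symm (h.1 (Gam θ g x)) :=
            hconj_apply t h.1 hDw x
          by_cases hA : ∃ hxr : x ∈ range θ, ((pre hxr).2 : ℝ) < 2 + δ
          · obtain ⟨hxr, hu⟩ := hA
            have hgamx : Gam θ g x = θ ((pre hxr).1, g (pre hxr).2) := Gam_mem _ hxr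
            have hbcoord : ((g (pre hxr).2 : Ico4) : ℝ) = bF (t:ℝ) δ ((pre hxr).2 : ℝ) := rfl
            by_cases hb2 : ((g (pre hxr).2 : Ico4) : ℝ) ≤ 2
            · -- squeezed into the fixed region
              have hy₁mem : Gam θ g x ∈ NS θ 2 := by
                rw [hgamx]; exact theta_mem_NS _ hb2
              have hfy₁ : h₀.1 (Gam θ g x) = Gam θ g x := hfix2 _ hy₁mem
              have d1 : dist (h.1 (Gam θ g x)) (Gam θ g x) ≤ η := by
                calc dist (h.1 (Gam θ g x)) (Gam θ g x)
                    ≤ dist (h.1 (Gam θ g x)) (h₀.1 (Gam θ g x)) +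
                      dist (h₀.1 (Gam θ g x)) (Gam θ g x) := dist_triangle _ _ _
                  _ ≤ η + 0 := by
                      apply add_le_add
                      · exact (hwcl _).le
                      · rw [hfy₁, dist_self]
                  _ = η := by ring
              have hGsy : Gam θ g.symm (Gam θ g x) = x := hGG t h.1 hDw x
              have d2 : dist (conj t h.1 hDw x) x ≤ ε/8 := by
                have hd2' := he g.symm (bIco_symm_lip _ _ _ _) (hbbsymmfix t h.1 hDw)
                  (hbbsymmmaps t h.1 hDw) (h.1 (Gam θ g x)) (Gam θ g x) (le_trans d1 hη2)
                rw [hGsy] at hd2'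
                rw [hconjx]
                exact hd2'
              have d3 : dist x (h₀.1 x) ≤ ε/8 + ε/8 := by
                rcases le_or_gt ((pre hxr).2 : ℝ) 2 with h2 | h2
                · have : x ∈ NS θ 2 := by rw [mem_NS_iff hinj hxr]; exact h2
                  rw [hfix2 _ this, dist_self]
                  positivity
                · set x₂ := θ ((pre hxr).1, (⟨2, by norm_num⟩ : Ico4)) with hx₂def
                  have hdx₂ : dist x x₂ ≤ εθ := by
                    rw [show x = θ (pre hxr) from (theta_pre hxr).symm, hx₂def]
                    apply hθm
                    · show ((pre hxr).2 : ℝ) ≤ 27/10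
                      have : δ ≤ 1/2 := min_le_left _ _
                      linarith
                    · show ((2:ℝ)) ≤ 27/10
                      norm_num
                    · rw [Prod.dist_eq, max_le_iff]
                      constructor
                      · show dist (pre hxr).1 ((pre hxr).1, (⟨2, by norm_num⟩ : Ico4)).1 ≤ κθ
                        dsimp only
                        rw [dist_self]; linarith [hκθ]
                      · show dist (pre hxr).2 ((pre hxr).1, (⟨2, by norm_num⟩ : Ico4)).2 ≤ κθ
                        dsimp only
                        rw [Subtype.dist_eq, Real.dist_eq, abs_le]
                        dsimp only
                        constructor <;> nlinarith [hη3, hδη, h2, hu]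
                  have hx₂mem : x₂ ∈ NS θ 2 := theta_mem_NS _ (by norm_num)
                  have hfx₂ : h₀.1 x₂ = x₂ := hfix2 _ hx₂mem
                  calc dist x (h₀.1 x) ≤ dist x x₂ + dist x₂ (h₀.1 x) := dist_triangle _ _ _
                    _ = dist x x₂ + dist (h₀.1 x₂) (h₀.1 x) := by rw [hfx₂]
                    _ ≤ εθ + ε/8 := by
                        apply add_le_add hdx₂
                        apply le_of_lt
                        apply hhm
                        rw [dist_comm]
                        exact lt_of_le_of_lt hdx₂ (by linarith)
                    _ ≤ ε/8 + ε/8 := by linarith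
              calc dist (h₀.1 x) (conj t h.1 hDw x)
                  ≤ dist (h₀.1 x) x + dist x (conj t h.1 hDw x) := dist_triangle _ _ _
                _ ≤ (ε/8 + ε/8) + ε/8 := by
                    apply add_le_add
                    · rw [dist_comm]; exact d3
                    · rw [dist_comm]; exact d2
                _ < ε := by linarith
            · -- squeezed but still above level 2
              push_neg at hb2
              have hule : ((g (pre hxr).2 : Ico4) : ℝ) ≤ ((pre hxr).2 : ℝ) := by
                rw [hbcoord]; exact bF_le _
              have hbd : ((pre hxr).2 : ℝ) - ((g (pre hxr).2 : Ico4) : ℝ) ≤ δ := by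
                rw [hbcoord] at hb2 ⊢
                exact bF_gt_two t.2.1 hδ0 hb2
              have hdxy₁ : dist (Gam θ g x) x ≤ εθ := by
                have hpre : dist (θ ((pre hxr).1, g (pre hxr).2)) (θ (pre hxr)) ≤ εθ := by
                  apply hθm
                  · show ((g (pre hxr).2 : Ico4) : ℝ) ≤ 27/10
                    have : δ ≤ 1/2 := min_le_left _ _
                    linarith
                  · show ((pre hxr).2 : ℝ) ≤ 27/10
                    have : δ ≤ 1/2 := min_le_left _ _
                    linarith
                  · rw [Prod.dist_eq, max_le_iff]
                    constructor
                    · show dist ((pre hxr).1, g (pre hxr).2).1 (pre hxr).1 ≤ κθ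
                      dsimp only
                      rw [dist_self]; linarith [hκθ]
                    · show dist ((pre hxr).1, g (pre hxr).2).2 (pre hxr).2 ≤ κθ
                      dsimp only
                      rw [Subtype.dist_eq, Real.dist_eq, abs_le]
                      constructor <;> nlinarith [hη3, hδη, hbd, hule]
                rw [hgamx]
                rw [theta_pre hxr] at hpre
                exact hpre
              have hy₁range : Gam θ g x ∈ range θ := by
                rw [hgamx]; exact ⟨_, rfl⟩
              have hy₁nm : Gam θ g x ∉ NS θ 2 := by
                intro hc
                rw [hgamx, theta_mem_NS_iff hinj] at hc
                simp only at hc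
                linarith
              have T1 : dist (Gam θ g.symm (h.1 (Gam θ g x))) (h.1 (Gam θ g x)) ≤ εθ :=
                key2 _ hy₁nm
              calc dist (h₀.1 x) (conj t h.1 hDw x)
                  ≤ dist (h₀.1 x) (h₀.1 (Gam θ g x)) +
                    dist (h₀.1 (Gam θ g x)) (h.1 (Gam θ g x)) +
                    dist (h.1 (Gam θ g x)) (conj t h.1 hDw x) := dist_triangle4 _ _ _ _
                _ ≤ ε/8 + η + εθ := by
                    gcongr
                    · apply le_of_lt
                      apply hhm
                      rw [dist_comm] at hdxy₁
                      exact lt_of_le_of_lt hdxy₁ (by linarith)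
                    · rw [dist_comm]
                      exact (hwcl _).le
                    · rw [hconjx, dist_comm]
                      exact T1
                _ < ε := by linarith
          · -- x is outside the moved zone
            push_neg at hA
            have hGx : Gam θ g x = x := by
              by_cases hxr : x ∈ range θ
              · rw [Gam_mem _ hxr, hgidF t h.1 hDw _ (hA hxr),
                  show ((pre hxr).1, (pre hxr).2) = pre hxr from rfl, theta_pre hxr]
              · exact Gam_nmem _ hxr
            have hxnm : x ∉ NS θ 2 := by
              intro hc
              have hxr := NS_subset_range 2 hc
              rw [mem_NS_iff hinj hxr] at hc
              have := hA hxr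
              linarith
            have T1 : dist (Gam θ g.symm (h.1 x)) (h.1 x) ≤ εθ := key2 _ hxnm
            calc dist (h₀.1 x) (conj t h.1 hDw x)
                ≤ dist (h₀.1 x) (h.1 x) + dist (h.1 x) (conj t h.1 hDw x) :=
                  dist_triangle _ _ _
              _ ≤ η + εθ := by
                  gcongr
                  · rw [dist_comm]; exact (hwcl _).le
                  · rw [hconjx, hGx, dist_comm]; exact T1
              _ < ε := by linarith
      · -- CASE A : h₀ not in the subgroup ; the construction is locally parametric
        have hD₀pos : 0 < D h₀.1 :=
          lt_of_le_of_ne (hDnonneg h₀.1) (Ne.symm hD₀)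
        set δ₀ := min (1/2) (D h₀.1) with hδ₀def
        have hδ₀pos : 0 < δ₀ := (hbbmk t₀ h₀.1 hD₀).1
        set δm := min (1/2) (D h₀.1 / 2) with hδmdef
        have hδm : 0 < δm := by
          apply lt_min (by norm_num)
          linarith
        set Cp := 3 + 2 / δm + 2 / δm ^ 2 with hCpdef
        have hCp : 0 < Cp := by positivity
        obtain ⟨κe, hκe, he⟩ := equi_lem hθ hS (ε/3) (by positivity)
        obtain ⟨κh, hκh, hhm⟩ := Metric.uniformContinuous_iff.mp
          (h₀.1.uniformContinuous) (κe/2) (by positivity)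
        obtain ⟨κc1, hκc1, hc1⟩ := close_lem hθ hS (κh/2) (by positivity)
        obtain ⟨κc2, hκc2, hc2⟩ := close_lem hθ hS (ε/3) (by positivity)
        set η := min (D h₀.1/2) (min (κe/2) (min (κc1/(2*Cp+1)) (κc2/(4*Cp+1)))) with hηdef
        have hη : 0 < η := by positivity
        have hη1 : η ≤ D h₀.1/2 := min_le_left _ _
        have hη2 : η ≤ κe/2 := le_trans (min_le_right _ _) (min_le_left _ _)
        have hη3 : η ≤ κc1/(2*Cp+1) := le_trans (min_le_right _ _)
          (le_trans (min_le_right _ _) (min_le_left _ _))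
        have hη4 : η ≤ κc2/(4*Cp+1) := le_trans (min_le_right _ _)
          (le_trans (min_le_right _ _) (min_le_right _ _))
        filter_upwards [hbase (h₀, t₀) η hη] with w hw
        obtain ⟨hwcl, hwt⟩ := hw
        intro x
        have hDwd1 : D w.1.1 ≤ D h₀.1 + η :=
          hDdiff w.1.1 h₀.1 η hη.le (fun z => (hwcl z).le)
        have hDwd2 : D h₀.1 ≤ D w.1.1 + η :=
          hDdiff h₀.1 w.1.1 η hη.le (fun z => by rw [dist_comm]; exact (hwcl z).le)
        have hDw : D w.1.1 ≠ 0 := by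
          intro hc
          rw [hc] at hDwd2
          linarith
        rw [hφneg (h₀, t₀) hD₀, hφneg w hDw]
        set t := w.2
        set h := w.1
        set δw := min (1/2) (D h.1) with hδwdef
        set g := bb t h.1 hDw with hgdef
        set g₀ := bb t₀ h₀.1 hD₀ with hg₀def
        have hδwm : δm ≤ δw := by
          apply le_min (le_trans (min_le_left _ _) le_rfl)
          calc δm ≤ D h₀.1/2 := min_le_right _ _
            _ ≤ D h.1 := by linarith
        have hδ₀m : δm ≤ δ₀ := by
          apply le_min (le_trans (min_le_left _ _) le_rfl)
          calc δm ≤ D h₀.1/2 := min_le_right _ _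
            _ ≤ D h₀.1 := by linarith
        have hmind : ∀ a b : ℝ, a ≤ b → min (1/2) b - min (1/2) a ≤ b - a := by
          intro a b hab
          rcases le_total (1/2:ℝ) a with h3 | h3
          · rw [min_eq_left h3, min_eq_left (le_trans h3 hab)]
            linarith
          · rw [min_eq_right h3]
            rcases le_total (1/2:ℝ) b with h4 | h4
            · rw [min_eq_left h4]; linarith
            · rw [min_eq_right h4]
        have hδdiff : |δw - δ₀| ≤ η := by
          have hD1 : |D h.1 - D h₀.1| ≤ η := by
            rw [abs_le]; constructor <;> linarith [hDwd1, hDwd2]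
          rcases le_total (D h.1) (D h₀.1) with hab | hab
          · have h1 : min (1/2:ℝ) (D h.1) ≤ min (1/2) (D h₀.1) := min_le_min le_rfl hab
            have h2 := hmind (D h.1) (D h₀.1) hab
            rw [abs_le] at hD1 ⊢
            constructor <;> [nlinarith [hD1.1]; nlinarith [hD1.2]]
          · have h1 : min (1/2:ℝ) (D h₀.1) ≤ min (1/2) (D h.1) := min_le_min le_rfl hab
            have h2 := hmind (D h₀.1) (D h.1) hab
            rw [abs_le] at hD1 ⊢
            constructor <;> [nlinarith [hD1.1]; nlinarith [hD1.2]]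
        have hparamsum : (|((t:ℝ)) - ((t₀:ℝ))| + |δw - δ₀|) ≤ 2 * η := by
          have := abs_sub_comm ((t:ℝ)) ((t₀:ℝ))
          linarith [hwt.le, hδdiff]
        have hfwd : ∀ u : Ico4, dist (g u) (g₀ u) ≤ κc1 := by
          intro u
          calc dist (g u) (g₀ u) ≤ (|((t:ℝ)) - ((t₀:ℝ))| + |δw - δ₀|) * Cp :=
                bIco_forward_param _ _ _ _ δm t₀.2.1 t₀.2.2 hδ₀pos (min_le_left _ _)
                  hδm hδwm hδ₀m u
            _ ≤ 2 * η * Cp := by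
                apply mul_le_mul_of_nonneg_right hparamsum hCp.le
            _ ≤ κc1 := by
                rw [le_div_iff₀ (by positivity)] at hη3
                nlinarith
        have hsym : ∀ v : Ico4, dist (g.symm v) (g₀.symm v) ≤ κc2 := by
          intro v
          calc dist (g.symm v) (g₀.symm v) ≤
                2 * ((|((t:ℝ)) - ((t₀:ℝ))| + |δw - δ₀|) * Cp) :=
                bIco_symm_param _ _ _ _ t₀.2.1 t₀.2.2 hδ₀pos (min_le_left _ _)
                  hδm hδwm hδ₀m v
            _ ≤ 2 * (2 * η * Cp) := by
                apply mul_le_mul_of_nonneg_left _ (by norm_num)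
                apply mul_le_mul_of_nonneg_right hparamsum hCp.le
            _ ≤ κc2 := by
                rw [le_div_iff₀ (by positivity)] at hη4
                nlinarith
        have hGclose : ∀ z : X, dist (Gam θ g z) (Gam θ g₀ z) ≤ κh/2 :=
          hc1 g g₀ (hbbfix t h.1 hDw) (hbbfix t₀ h₀.1 hD₀) (hbbmaps t h.1 hDw)
            (hbbmaps t₀ h₀.1 hD₀) hfwd
        have hGsymmclose : ∀ z : X, dist (Gam θ g₀.symm z) (Gam θ g.symm z) ≤ ε/3 :=
          hc2 g₀.symm g.symm (hbbsymmfix t₀ h₀.1 hD₀) (hbbsymmfix t h.1 hDw)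
            (hbbsymmmaps t₀ h₀.1 hD₀) (hbbsymmmaps t h.1 hDw)
            (fun v => by rw [dist_comm]; exact hsym v)
        have hinner : dist (h₀.1 (Gam θ g₀ x)) (h.1 (Gam θ g x)) ≤ κe := by
          calc dist (h₀.1 (Gam θ g₀ x)) (h.1 (Gam θ g x))
              ≤ dist (h₀.1 (Gam θ g₀ x)) (h₀.1 (Gam θ g x)) +
                dist (h₀.1 (Gam θ g x)) (h.1 (Gam θ g x)) := dist_triangle _ _ _
            _ ≤ κe/2 + κe/2 := by
                apply add_le_add
                · apply le_of_lt
                  apply hhm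
                  rw [dist_comm]
                  exact lt_of_le_of_lt (hGclose x) (by linarith)
                · rw [dist_comm]
                  exact le_trans (hwcl _).le hη2
            _ = κe := by ring
        calc dist ((conj t₀ h₀.1 hD₀) x) ((conj t h.1 hDw) x)
            = dist (Gam θ g₀.symm (h₀.1 (Gam θ g₀ x))) (Gam θ g.symm (h.1 (Gam θ g x))) := by
              rw [hconj_apply t₀ h₀.1 hD₀ x, hconj_apply t h.1 hDw x]
          _ ≤ dist (Gam θ g₀.symm (h₀.1 (Gam θ g₀ x))) (Gam θ g.symm (h₀.1 (Gam θ g₀ x))) +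
              dist (Gam θ g.symm (h₀.1 (Gam θ g₀ x))) (Gam θ g.symm (h.1 (Gam θ g x))) :=
              dist_triangle _ _ _
          _ ≤ ε/3 + ε/3 := by
              apply add_le_add (hGsymmclose _)
              exact he g.symm (bIco_symm_lip _ _ _ _) (hbbsymmfix t h.1 hDw)
                (hbbsymmmaps t h.1 hDw) _ _ hinner
          _ < ε := by linarith
    -- conclude continuity from the induced topologies
    apply continuous_induced_rng.mpr
    apply continuous_induced_rng.mpr
    rw [continuous_iff_continuousAt]
    intro w₀
    show Filter.Tendsto _ (nhds w₀) _
    apply UniformFun.tendsto_iff_tendstoUniformly.mpr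
    rw [Metric.tendstoUniformly_iff]
    intro ε hε
    exact hkey w₀ ε hε
  · -- φ (h, 0) = h
    intro h
    by_cases hD : D h.1 = 0
    · exact hφpos (h, 0) hD
    · apply Subtype.ext
      rw [hφneg (h, 0) hD]
      apply UniformEquiv.toEquiv_injective
      apply Equiv.ext
      intro x
      have hpt : ∀ u : Ico4, bb 0 h.1 hD u = u := by
        intro u
        apply Subtype.ext
        have : ((bb 0 h.1 hD u : Ico4) : ℝ) = bF ((0:I):ℝ) (min (1/2) (D h.1)) (u:ℝ) := rfl
        rw [this, show ((0:I):ℝ) = 0 from rfl, bF_t_zero]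
      have hpts : ∀ u : Ico4, (bb 0 h.1 hD).symm u = u := by
        intro u
        rw [Equiv.symm_apply_eq, hpt]
      have e1 : conj 0 h.1 hD x = Gam θ (bb 0 h.1 hD).symm (h.1 (Gam θ (bb 0 h.1 hD) x)) :=
        hconj_apply 0 h.1 hD x
      have e2 : Gam θ (bb 0 h.1 hD) x = x := by
        rw [Gam_congr (g := Equiv.refl Ico4) (fun u => hpt u), Gam_refl]
      have e3 : Gam θ (bb 0 h.1 hD).symm (h.1 x) = h.1 x := by
        rw [Gam_congr (g := Equiv.refl Ico4) (fun u => hpts u), Gam_refl]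
      show conj 0 h.1 hD x = h.1 x
      rw [e1, e2, e3]
  · -- φ (h, 1) ∈ G 2
    intro h
    by_cases hD : D h.1 = 0
    · rw [hφpos (h, 1) hD]
      exact ⟨h.2.1, by rw [hN 2]; exact (hDzero h.1).mp hD⟩
    · rw [hφneg (h, 1) hD]
      constructor
      · exact (hmemG1 1 h hD).1
      · intro x hx
        rw [hN 2] at hx
        obtain ⟨p, ⟨-, hp⟩, rfl⟩ := hx
        have hfix1 : ∀ x ∈ NS θ 1, h.1 x = x := h.2.2
        rw [hconj_apply 1 h.1 hD _, Gam_theta hinj]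
        have hmem1 : θ (p.1, bb 1 h.1 hD p.2) ∈ NS θ 1 := by
          apply theta_mem_NS
          have e : ((bb 1 h.1 hD p.2 : Ico4) : ℝ) = bF ((1:I):ℝ) (min (1/2) (D h.1)) (p.2:ℝ) :=
            rfl
          rw [e, show ((1:I):ℝ) = 1 from rfl]
          exact bF_le_one_of_t_one (hbbmk 1 h.1 hD).1 hp
        rw [hfix1 _ hmem1, ← Gam_theta hinj (bb 1 h.1 hD) p, hGG 1 h.1 hD]
  · -- strong deformation: fixes G 2 pointwise
    intro h hG2 t
    rw [hφdef]
    have hD : D h.1 = 0 := by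
      rw [hDzero]
      intro x hx
      exact hG2.2 x (by rw [hN 2]; exact hx)
    exact hφpos (h, t) hD
  · -- support condition
    intro h t x hhx hx
    by_cases hD : D h.1 = 0
    · rw [hφpos (h, t) hD]
    · rw [hφneg (h, t) hD]
      rw [hN 3] at hhx hx
      have e2 : Gam θ (bb t h.1 hD) x = x := by
        by_contra hc
        obtain ⟨hxr, hx5⟩ := Gam_moved (hbbfix t h.1 hD) hc
        apply hx
        rw [mem_NS_iff hinj hxr]
        linarith
      have e3 : Gam θ (bb t h.1 hD).symm (h.1 x) = h.1 x := by
        by_contra hc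
        obtain ⟨hxr, hx5⟩ := Gam_moved (hbbsymmfix t h.1 hD) hc
        apply hhx
        rw [mem_NS_iff hinj hxr]
        linarith
      show conj t h.1 hD x = h.1 x
      rw [hconj_apply t h.1 hD x, e2, e3]
end

section
/- Let (X,d) be a metric space and L ⊂ X a bi-Lipschitz n-dimensional Euclidean end, i.e., L is closed, there is a bi-Lipschitz homeomorphism θ : ℝⁿ_1 → (L, d|_L) with θ(∂ℝⁿ_1) = Fr_X L, and d(X − L, θ(ℝⁿ_r)) → ∞ as r → ∞. Then for every λ > 0 there exists r > 1 such that every uniform homeomorphism h of X with d(h, id_X) ≤ λ satisfies h(L_r) ⊂ L_1, where L_a = θ(ℝⁿ_a). -/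
/-- `ℝⁿ_r = {x : ‖x‖ ≥ r}`. -/
def Rset (n : ℕ) (r : ℝ) : Set (EuclideanSpace ℝ (Fin n)) := {x | r ≤ ‖x‖}

/-- For a bi-Lipschitz Euclidean end `L = θ(ℝⁿ_1)` of a metric space `X`:
for every `λ > 0` there is `r > 1` such that every uniform homeomorphism `h`
of `X` with `d(h, id) ≤ λ` satisfies `h(L_r) ⊆ L_1`. -/
theorem stmt_19 {n : ℕ} {X : Type*} [MetricSpace X]
    (L : Set X) (hLclosed : IsClosed L)
    (κ : ℝ) (hκ : 1 ≤ κ)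
    (θ : ↥(Rset n 1) → X)
    (hbl : ∀ x y : ↥(Rset n 1),
      dist x y ≤ κ * dist (θ x) (θ y) ∧ dist (θ x) (θ y) ≤ κ * dist x y)
    (hrange : Set.range θ = L)
    (hfr : θ '' {x : ↥(Rset n 1) | ‖(x : EuclideanSpace ℝ (Fin n))‖ = 1} = frontier L)
    (hdiv : ∀ c : ℝ, ∃ r : ℝ, ∀ x ∉ L,
      ∀ y ∈ θ '' {z : ↥(Rset n 1) | r ≤ ‖(z : EuclideanSpace ℝ (Fin n))‖}, c ≤ dist x y) :
    ∀ lam > (0:ℝ), ∃ r > (1:ℝ), ∀ h : X ≃ᵤ X, (∀ x, dist (h x) x ≤ lam) →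
      (⇑h) '' (θ '' {z : ↥(Rset n 1) | r ≤ ‖(z : EuclideanSpace ℝ (Fin n))‖}) ⊆ L := by
  intro lam hlam
  obtain ⟨r, hr⟩ := hdiv (lam + 1)
  refine ⟨max r 2, lt_of_lt_of_le one_lt_two (le_max_right _ _), ?_⟩
  intro h hh x hx
  rcases hx with ⟨y, ⟨z, hz, rfl⟩, rfl⟩
  by_contra hnot
  have hz2 : r ≤ ‖(z : EuclideanSpace ℝ (Fin n))‖ := le_trans (le_max_left _ _) hz
  have := hr _ hnot (θ z) ⟨z, hz2, rfl⟩
  have h2 := hh (θ z)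
  linarith
end
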